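/- arXiv:1810.00242 — 3 statements merged into one kernel-verified Lean document; each statement's English description precedes it below -/
import Mathlib

section
/- Let r > 0 and let (M,d,p) be a complete pointed ℝ-tree of radius ≤ r. Then (M,d,p) satisfies the branching condition for radius r if and only if (M,d,p) is richly branching; moreover, in that case sup{d(p,x) : x ∈ M} = r, i.e., M has radius exactly r. -/
open Set Metric

/-- A geodesic segment in a metric space: the image of an isometric embedding of a
closed real interval `[0, ℓ]`, going from `a` to `b`. -/
def IsGeodesicSegmentFromTo {M : Type*} [MetricSpace M] (s : Set M) (a b : M) : Prop :=
  ∃ ℓ : ℝ, 0 ≤ ℓ ∧ ∃ γ : ℝ → M,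
    (∀ u ∈ Set.Icc (0:ℝ) ℓ, ∀ v ∈ Set.Icc (0:ℝ) ℓ, dist (γ u) (γ v) = |u - v|) ∧
    γ 0 = a ∧ γ ℓ = b ∧ s = γ '' Set.Icc 0 ℓ

/-- An arc from `a` to `b`: the (injective, continuous) image of a closed real
interval `[0, ℓ]`; a single point when `a = b`. -/
def IsArcFromTo {M : Type*} [MetricSpace M] (s : Set M) (a b : M) : Prop :=
  ∃ ℓ : ℝ, 0 ≤ ℓ ∧ ∃ γ : ℝ → M,
    ContinuousOn γ (Set.Icc 0 ℓ) ∧ Set.InjOn γ (Set.Icc 0 ℓ) ∧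
    γ 0 = a ∧ γ ℓ = b ∧ s = γ '' Set.Icc 0 ℓ

/-- An ℝ-tree: a metric space in which any two points are joined by a unique arc,
and that arc is a geodesic segment. -/
def IsRTree (M : Type*) [MetricSpace M] : Prop :=
  ∀ a b : M, ∃ s : Set M,
    IsArcFromTo s a b ∧ IsGeodesicSegmentFromTo s a b ∧
    ∀ t : Set M, IsArcFromTo t a b → t = s

/-- The geodesic segment `[a, b]` in an ℝ-tree: the unique arc from `a` to `b`. -/
noncomputable def seg {M : Type*} [MetricSpace M] (h : IsRTree M) (a b : M) : Set M :=
  (h a b).choose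

/-- The branches at `a`: the connected components of `M ∖ {a}`. -/
def Branches {M : Type*} [MetricSpace M] (a : M) : Set (Set M) :=
  {β : Set M | ∃ x : M, x ≠ a ∧ β = connectedComponentIn (({a} : Set M)ᶜ) x}

/-- The branch `β` at `b` has height at least `h`:
`sup {d(b,x) : x ∈ β} ≥ h`, i.e. `β` contains points at distance arbitrarily
close to (at least) `h` from `b`. -/
def HeightGE {M : Type*} [MetricSpace M] (b : M) (β : Set M) (h : ℝ) : Prop :=
  ∀ h' : ℝ, h' < h → ∃ x ∈ β, h' < dist b x

/-- There are at least 3 branches at `b` of height ≥ `h`. -/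
def ThreeBranchesGE {M : Type*} [MetricSpace M] (b : M) (h : ℝ) : Prop :=
  ∃ β₁ β₂ β₃ : Set M, β₁ ∈ Branches b ∧ β₂ ∈ Branches b ∧ β₃ ∈ Branches b ∧
    β₁ ≠ β₂ ∧ β₁ ≠ β₃ ∧ β₂ ≠ β₃ ∧
    HeightGE b β₁ h ∧ HeightGE b β₂ h ∧ HeightGE b β₃ h

/-- A pointed ℝ-tree of radius ≤ `r` is richly branching if the set of points `b`
having at least 3 branches of height ≥ `r − d(p,b)` is dense. -/
def RichlyBranchingAt {M : Type*} [MetricSpace M] (p : M) (r : ℝ) : Prop :=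
  Dense {b : M | ThreeBranchesGE b (r - dist p b)}

/-- The branching condition for radius `r`: for every `x` and every `ε > 0` there
are `y₁, y₂, y₃` with `|d(x,yᵢ) − (r − d(p,x))| ≤ ε` and
`d(x,yᵢ) + d(x,yⱼ) − d(yᵢ,yⱼ) ≤ ε` for `i < j`. -/
def BranchingCondition {M : Type*} [MetricSpace M] (p : M) (r : ℝ) : Prop :=
  ∀ x : M, ∀ ε : ℝ, 0 < ε → ∃ y₁ y₂ y₃ : M,
    |dist x y₁ - (r - dist p x)| ≤ ε ∧
    |dist x y₂ - (r - dist p x)| ≤ ε ∧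
    |dist x y₃ - (r - dist p x)| ≤ ε ∧
    dist x y₁ + dist x y₂ - dist y₁ y₂ ≤ ε ∧
    dist x y₁ + dist x y₃ - dist y₁ y₃ ≤ ε ∧
    dist x y₂ + dist x y₃ - dist y₂ y₃ ≤ ε

/-!
In an ℝ-tree a point `w` lies on `[a, b]` iff `d(a,w) + d(w,b) = d(a,b)`, any three points have
a median, and Gromov products satisfy the four-point condition. Hence two points `u, v ≠ b` lie
in the same branch at `b` iff their Gromov product at `b` is positive.

If `b` has three branches of height `≥ r - d(p,b)`, points of these branches truncated at that
height have vanishing pairwise Gromov products at `b`, which gives the branching condition at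
every point near `b`. Conversely, under the branching condition every branch at every point `b`
has height `≥ r - d(p,b)`: of a branching triple at a point `y` of the branch, one element points
away from `b`. And near any `x` there is a point with three branches: the median of a branching
triple at a point `x'` near `x` with `r - d(p,x')` bounded below. The branching condition at `p`
gives the supremum.
-/

section Isometric

variable {M : Type*} [MetricSpace M] {γ : ℝ → M} {S : Set ℝ}

lemma continuousOn_of_dist_eq_abs_sub (hγ : ∀ u ∈ S, ∀ v ∈ S, dist (γ u) (γ v) = |u - v|) :
    ContinuousOn γ S := by
  refine (LipschitzOnWith.of_dist_le_mul (K := 1) fun u hu v hv => ?_).continuousOn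
  rw [hγ u hu v hv, NNReal.coe_one, one_mul, Real.dist_eq]

lemma injOn_of_dist_eq_abs_sub (hγ : ∀ u ∈ S, ∀ v ∈ S, dist (γ u) (γ v) = |u - v|) :
    InjOn γ S := fun u hu v hv huv => by
  simpa [huv, sub_eq_zero, eq_comm] using hγ u hu v hv

end Isometric

section Concat

variable {X : Type*}

noncomputable def pathConcat (γ₁ γ₂ : ℝ → X) (ℓ : ℝ) : ℝ → X :=
  fun t => if t ≤ ℓ then γ₁ t else γ₂ (t - ℓ)

variable {γ₁ γ₂ : ℝ → X} {ℓ₁ ℓ₂ : ℝ}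

lemma eqOn_pathConcat_left : EqOn (pathConcat γ₁ γ₂ ℓ₁) γ₁ (Iic ℓ₁) := fun _ ht => if_pos ht

lemma eqOn_pathConcat_right (h : γ₁ ℓ₁ = γ₂ 0) :
    EqOn (pathConcat γ₁ γ₂ ℓ₁) (fun t => γ₂ (t - ℓ₁)) (Ici ℓ₁) := fun t ht => by
  rcases (mem_Ici.1 ht).eq_or_lt with rfl | hlt
  · simp [pathConcat, h]
  · exact if_neg hlt.not_ge

lemma mapsTo_sub_Icc : MapsTo (· - ℓ₁) (Icc ℓ₁ (ℓ₁ + ℓ₂)) (Icc 0 ℓ₂) := fun t ht =>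
  ⟨by linarith [ht.1], by linarith [ht.2]⟩

lemma isArcFromTo_pathConcat [MetricSpace X] (hℓ₁ : 0 ≤ ℓ₁) (hℓ₂ : 0 ≤ ℓ₂)
    (hc₁ : ContinuousOn γ₁ (Icc 0 ℓ₁)) (hc₂ : ContinuousOn γ₂ (Icc 0 ℓ₂))
    (hi₁ : InjOn γ₁ (Icc 0 ℓ₁)) (hi₂ : InjOn γ₂ (Icc 0 ℓ₂)) (h : γ₁ ℓ₁ = γ₂ 0)
    (hmeet : γ₁ '' Icc 0 ℓ₁ ∩ γ₂ '' Icc 0 ℓ₂ ⊆ {γ₂ 0}) :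
    IsArcFromTo (pathConcat γ₁ γ₂ ℓ₁ '' Icc 0 (ℓ₁ + ℓ₂)) (γ₁ 0) (γ₂ ℓ₂) := by
  have hleft : EqOn (pathConcat γ₁ γ₂ ℓ₁) γ₁ (Icc 0 ℓ₁) :=
    eqOn_pathConcat_left.mono Icc_subset_Iic_self
  have hright : EqOn (pathConcat γ₁ γ₂ ℓ₁) (fun t => γ₂ (t - ℓ₁)) (Icc ℓ₁ (ℓ₁ + ℓ₂)) :=
    (eqOn_pathConcat_right h).mono Icc_subset_Ici_self
  refine ⟨ℓ₁ + ℓ₂, by positivity, _, ?_, ?_, hleft ⟨le_rfl, hℓ₁⟩, ?_, rfl⟩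
  · rw [← Icc_union_Icc_eq_Icc hℓ₁ (by linarith)]
    exact (hc₁.congr hleft).union_of_isClosed
      ((hc₂.comp (by fun_prop) mapsTo_sub_Icc).congr hright) isClosed_Icc isClosed_Icc
  · intro u hu v hv huv
    wlog hle : u ≤ v generalizing u v
    · exact (this hv hu huv.symm (le_of_not_ge hle)).symm
    rcases le_or_gt v ℓ₁ with hv₁ | hv₁
    · have hu' : u ∈ Icc 0 ℓ₁ := ⟨hu.1, hle.trans hv₁⟩
      exact hi₁ hu' ⟨hv.1, hv₁⟩ ((hleft hu').symm.trans (huv.trans (hleft ⟨hv.1, hv₁⟩)))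
    have hv' : v ∈ Icc ℓ₁ (ℓ₁ + ℓ₂) := ⟨hv₁.le, hv.2⟩
    rcases le_or_gt u ℓ₁ with hu₁ | hu₁
    · have hmem : pathConcat γ₁ γ₂ ℓ₁ v ∈ γ₁ '' Icc 0 ℓ₁ ∩ γ₂ '' Icc 0 ℓ₂ :=
        ⟨⟨u, ⟨hu.1, hu₁⟩, (hleft ⟨hu.1, hu₁⟩).symm.trans huv⟩,
          ⟨v - ℓ₁, mapsTo_sub_Icc hv', (hright hv').symm⟩⟩
      have := hi₂ (mapsTo_sub_Icc hv') ⟨le_rfl, hℓ₂⟩ ((hright hv').symm.trans (hmeet hmem))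
      linarith
    · have hu' : u ∈ Icc ℓ₁ (ℓ₁ + ℓ₂) := ⟨hu₁.le, hu.2⟩
      have := hi₂ (mapsTo_sub_Icc hu') (mapsTo_sub_Icc hv')
        ((hright hu').symm.trans (huv.trans (hright hv')))
      linarith
  · simpa using hright ⟨by linarith, le_rfl⟩

end Concat

namespace IsGeodesicSegmentFromTo

variable {M : Type*} [MetricSpace M] {s : Set M} {a b : M}

lemma exists_param (h : IsGeodesicSegmentFromTo s a b) :
    ∃ γ : ℝ → M,
      (∀ u ∈ Icc (0:ℝ) (dist a b), ∀ v ∈ Icc (0:ℝ) (dist a b), dist (γ u) (γ v) = |u - v|) ∧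
      (∀ t ∈ Icc (0:ℝ) (dist a b), dist a (γ t) = t) ∧
      γ 0 = a ∧ γ (dist a b) = b ∧ s = γ '' Icc 0 (dist a b) := by
  obtain ⟨ℓ, hℓ, γ, hγ, h0, hℓb, rfl⟩ := h
  have hdist : ∀ t ∈ Icc 0 ℓ, dist a (γ t) = t := fun t ht => by
    rw [← h0, hγ 0 ⟨le_rfl, hℓ⟩ t ht, zero_sub, abs_neg, abs_of_nonneg ht.1]
  obtain rfl : dist a b = ℓ := hℓb ▸ hdist ℓ ⟨hℓ, le_rfl⟩
  exact ⟨γ, hγ, hdist, h0, hℓb, rfl⟩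

lemma isArcFromTo (h : IsGeodesicSegmentFromTo s a b) : IsArcFromTo s a b := by
  obtain ⟨ℓ, hℓ, γ, hγ, h0, hℓb, rfl⟩ := h
  exact ⟨ℓ, hℓ, γ, continuousOn_of_dist_eq_abs_sub hγ, injOn_of_dist_eq_abs_sub hγ, h0, hℓb, rfl⟩

lemma dist_left_le (h : IsGeodesicSegmentFromTo s a b) {w : M} (hw : w ∈ s) :
    dist a w ≤ dist a b := by
  obtain ⟨γ, -, hdist, -, -, rfl⟩ := h.exists_param
  obtain ⟨t, ht, rfl⟩ := hw
  exact (hdist t ht).trans_le ht.2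

lemma dist_eq_abs_sub (h : IsGeodesicSegmentFromTo s a b) {w₁ w₂ : M}
    (hw₁ : w₁ ∈ s) (hw₂ : w₂ ∈ s) : dist w₁ w₂ = |dist a w₁ - dist a w₂| := by
  obtain ⟨γ, hγ, hdist, -, -, rfl⟩ := h.exists_param
  obtain ⟨t₁, ht₁, rfl⟩ := hw₁
  obtain ⟨t₂, ht₂, rfl⟩ := hw₂
  rw [hγ t₁ ht₁ t₂ ht₂, hdist t₁ ht₁, hdist t₂ ht₂]

lemma dist_add_dist_eq (h : IsGeodesicSegmentFromTo s a b) {w : M} (hw : w ∈ s) :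
    dist a w + dist w b = dist a b := by
  obtain ⟨γ, -, -, -, hb, rfl⟩ := h.exists_param
  have hbs : b ∈ γ '' Icc 0 (dist a b) := ⟨dist a b, ⟨dist_nonneg, le_rfl⟩, hb⟩
  rw [h.dist_eq_abs_sub hw hbs, abs_sub_comm, abs_of_nonneg (sub_nonneg.2 (h.dist_left_le hw))]
  ring

lemma exists_mem_dist_left_eq (h : IsGeodesicSegmentFromTo s a b) {t : ℝ}
    (ht : t ∈ Icc 0 (dist a b)) : ∃ w ∈ s, dist a w = t := by
  obtain ⟨γ, -, hdist, -, -, rfl⟩ := h.exists_param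
  exact ⟨γ t, mem_image_of_mem γ ht, hdist t ht⟩

lemma isCompact (h : IsGeodesicSegmentFromTo s a b) : IsCompact s := by
  obtain ⟨ℓ, -, γ, hγ, -, -, -, rfl⟩ := h.isArcFromTo
  exact isCompact_Icc.image_of_continuousOn hγ

lemma isPreconnected (h : IsGeodesicSegmentFromTo s a b) : IsPreconnected s := by
  obtain ⟨ℓ, -, γ, hγ, -, -, -, rfl⟩ := h.isArcFromTo
  exact isPreconnected_Icc.image γ hγ

end IsGeodesicSegmentFromTo

lemma eq_connectedComponentIn_of_mem_branches {M : Type*} [MetricSpace M] {b y : M}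
    {β : Set M} (hβ : β ∈ Branches b) (hy : y ∈ β) :
    y ≠ b ∧ β = connectedComponentIn {b}ᶜ y := by
  obtain ⟨x, -, rfl⟩ := hβ
  exact ⟨connectedComponentIn_subset _ _ hy, connectedComponentIn_eq hy⟩

namespace IsRTree

variable {M : Type*} [MetricSpace M] (hM : IsRTree M)
include hM

lemma isGeodesicSegmentFromTo_seg (a b : M) : IsGeodesicSegmentFromTo (seg hM a b) a b :=
  (hM a b).choose_spec.2.1

lemma eq_seg {t : Set M} {a b : M} (ht : IsArcFromTo t a b) : t = seg hM a b :=
  (hM a b).choose_spec.2.2 t ht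

/-- The concatenation of `[x, y]` and `[y, z]` is an arc, hence equals `[x, z]`. -/
lemma mem_seg_of_inter_subset {s₁ s₂ : Set M} {x y z : M}
    (h₁ : IsGeodesicSegmentFromTo s₁ x y) (h₂ : IsGeodesicSegmentFromTo s₂ y z)
    (h : s₁ ∩ s₂ ⊆ {y}) : y ∈ seg hM x z := by
  obtain ⟨γ₁, hγ₁, -, hx, hγ₁y, rfl⟩ := h₁.exists_param
  obtain ⟨γ₂, hγ₂, -, hy, hz, rfl⟩ := h₂.exists_param
  have harc := isArcFromTo_pathConcat dist_nonneg dist_nonneg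
    (continuousOn_of_dist_eq_abs_sub hγ₁) (continuousOn_of_dist_eq_abs_sub hγ₂)
    (injOn_of_dist_eq_abs_sub hγ₁) (injOn_of_dist_eq_abs_sub hγ₂) (hγ₁y.trans hy.symm)
    (hy.symm ▸ h)
  rw [hx, hz] at harc
  rw [← hM.eq_seg harc]
  exact ⟨dist x y, ⟨dist_nonneg, le_add_of_nonneg_right dist_nonneg⟩,
    (eqOn_pathConcat_left (mem_Iic.2 le_rfl)).trans hγ₁y⟩

lemma mem_seg_iff {a b w : M} : w ∈ seg hM a b ↔ dist a w + dist w b = dist a b := by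
  refine ⟨(hM.isGeodesicSegmentFromTo_seg a b).dist_add_dist_eq, fun hw => ?_⟩
  refine hM.mem_seg_of_inter_subset (hM.isGeodesicSegmentFromTo_seg a w)
    (hM.isGeodesicSegmentFromTo_seg w b) fun v ⟨hv₁, hv₂⟩ => ?_
  have h₁ := (hM.isGeodesicSegmentFromTo_seg a w).dist_add_dist_eq hv₁
  have h₂ := (hM.isGeodesicSegmentFromTo_seg w b).dist_add_dist_eq hv₂
  have := dist_triangle a v b
  rw [mem_singleton_iff, ← dist_le_zero, dist_comm]
  linarith [dist_comm w v]

lemma dist_eq_abs_sub_of_between {a b m₁ m₂ : M}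
    (h₁ : dist a m₁ + dist m₁ b = dist a b) (h₂ : dist a m₂ + dist m₂ b = dist a b) :
    dist m₁ m₂ = |dist a m₁ - dist a m₂| :=
  (hM.isGeodesicSegmentFromTo_seg a b).dist_eq_abs_sub (hM.mem_seg_iff.2 h₁) (hM.mem_seg_iff.2 h₂)

/-- The median of `a, u, v` is the point of `[a, u] ∩ [a, v]` farthest from `a`. -/
lemma exists_median (a u v : M) : ∃ m : M,
    dist a u = dist a m + dist m u ∧ dist a v = dist a m + dist m v ∧
      dist u v = dist u m + dist m v := by
  have hseg := hM.isGeodesicSegmentFromTo_seg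
  obtain ⟨m, ⟨hmu, hmv⟩, hmax⟩ :=
    ((hseg a u).isCompact.inter (hseg a v).isCompact).exists_isMaxOn (f := dist a)
      ⟨a, hM.mem_seg_iff.2 (by simp), hM.mem_seg_iff.2 (by simp)⟩
      (continuous_const.dist continuous_id).continuousOn
  rw [hM.mem_seg_iff] at hmu hmv
  refine ⟨m, hmu.symm, hmv.symm, ?_⟩
  suffices m ∈ seg hM u v by linarith [hM.mem_seg_iff.1 this]
  refine hM.mem_seg_of_inter_subset (hseg u m) (hseg m v) fun w ⟨hw₁, hw₂⟩ => ?_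
  rw [hM.mem_seg_iff] at hw₁ hw₂
  have hmw := dist_triangle a m w
  have hwu : dist a w + dist w u = dist a u := by
    linarith [dist_triangle a w u, dist_comm u w, dist_comm w m, dist_comm u m]
  have hwv : dist a w + dist w v = dist a v := by linarith [dist_triangle a w v]
  have : dist a w ≤ dist a m := hmax ⟨hM.mem_seg_iff.2 hwu, hM.mem_seg_iff.2 hwv⟩
  rw [mem_singleton_iff, ← dist_le_zero, dist_comm]
  linarith [dist_comm u w, dist_comm w m, dist_comm u m]

lemma two_mul_dist_le_of_between {b u v w m₁ m₂ : M}
    (h₁u : dist b m₁ + dist m₁ u = dist b u) (h₁v : dist b m₁ + dist m₁ v = dist b v)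
    (h₂v : dist b m₂ + dist m₂ v = dist b v) (h₂w : dist b m₂ + dist m₂ w = dist b w)
    (hle : dist b m₁ ≤ dist b m₂) :
    2 * dist b m₁ ≤ dist b u + dist b w - dist u w := by
  have h₁₂ := hM.dist_eq_abs_sub_of_between h₁v h₂v
  rw [abs_of_nonpos (by linarith)] at h₁₂
  linarith [dist_triangle4 u m₁ m₂ w, dist_comm u m₁]

lemma min_gromov_le (b u v w : M) :
    min (dist b u + dist b v - dist u v) (dist b v + dist b w - dist v w) ≤
      dist b u + dist b w - dist u w := by
  obtain ⟨m₁, h₁u, h₁v, h₁uv⟩ := hM.exists_median b u v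
  obtain ⟨m₂, h₂v, h₂w, h₂vw⟩ := hM.exists_median b v w
  rcases le_total (dist b m₁) (dist b m₂) with hle | hle
  · have := hM.two_mul_dist_le_of_between h₁u.symm h₁v.symm h₂v.symm h₂w.symm hle
    exact (min_le_left _ _).trans (by linarith [dist_comm u m₁])
  · have := hM.two_mul_dist_le_of_between h₂w.symm h₂v.symm h₁v.symm h₁u.symm hle
    exact (min_le_right _ _).trans (by linarith [dist_comm w u, dist_comm v m₂])

lemma connectedComponentIn_eq_of_between {b m u : M} (h : dist b m + dist m u = dist b u)
    (hm : m ≠ b) : connectedComponentIn {b}ᶜ u = connectedComponentIn {b}ᶜ m := by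
  have hseg := hM.isGeodesicSegmentFromTo_seg m u
  have hm_mem : m ∈ seg hM m u := hM.mem_seg_iff.2 (by simp)
  have hu_mem : u ∈ seg hM m u := hM.mem_seg_iff.2 (by simp)
  have hb : seg hM m u ⊆ {b}ᶜ := fun w hw hwb => hm <| by
    rw [mem_singleton_iff.1 hwb] at hw
    have := hseg.dist_add_dist_eq hw
    rw [← dist_le_zero]
    linarith [dist_comm m b]
  exact (connectedComponentIn_eq
    (hseg.isPreconnected.subset_connectedComponentIn hm_mem hb hu_mem)).symm

lemma isOpen_setOf_gromov_nonpos (b u : M) :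
    IsOpen {w | w ≠ b ∧ dist b u + dist b w - dist u w ≤ 0} := by
  refine Metric.isOpen_iff.2 fun w ⟨hwb, hw⟩ => ⟨dist b w, dist_pos.2 hwb.symm, fun w' hw' => ?_⟩
  rw [mem_ball] at hw'
  have hgp : 0 < dist b w' + dist b w - dist w' w := by linarith [dist_triangle b w' w]
  refine ⟨fun h => by simp [h] at hw', ?_⟩
  rcases min_le_iff.1 ((hM.min_gromov_le b u w' w).trans hw) with h | h
  · exact h
  · linarith

lemma connectedComponentIn_eq_iff {b u v : M} (hu : u ≠ b) (hv : v ≠ b) :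
    connectedComponentIn {b}ᶜ u = connectedComponentIn {b}ᶜ v ↔
      0 < dist b u + dist b v - dist u v := by
  constructor
  · intro heq
    by_contra! hgp
    set C := connectedComponentIn {b}ᶜ v
    have huC : u ∈ C := heq ▸ mem_connectedComponentIn hu
    have hcover : C ⊆ {w | 0 < dist b u + dist b w - dist u w} ∪
        {w | w ≠ b ∧ dist b u + dist b w - dist u w ≤ 0} := fun w hw => by
      have hwb : w ≠ b := connectedComponentIn_subset _ _ hw
      rcases lt_or_ge 0 (dist b u + dist b w - dist u w) with h | h
      exacts [Or.inl h, Or.inr ⟨hwb, h⟩]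
    obtain ⟨w, -, hw₁, -, hw₂⟩ := isPreconnected_connectedComponentIn _ _
      (isOpen_lt continuous_const (by fun_prop)) (hM.isOpen_setOf_gromov_nonpos b u) hcover
      ⟨u, huC, by simpa using dist_pos.2 hu.symm⟩ ⟨v, mem_connectedComponentIn hv, hv, hgp⟩
    exact (lt_irrefl _ (hw₁.trans_le hw₂))
  · intro hgp
    obtain ⟨m, hmu, hmv, hmuv⟩ := hM.exists_median b u v
    have hm : m ≠ b := by
      intro hmb
      rw [hmb] at hmuv
      linarith [dist_comm u b]
    rw [hM.connectedComponentIn_eq_of_between hmu.symm hm,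
      hM.connectedComponentIn_eq_of_between hmv.symm hm]

lemma gromov_nonpos_of_between {b y y' z z' : M} (hz : dist b z + dist z y = dist b y)
    (hz' : dist b z' + dist z' y' = dist b y') (h : dist b y + dist b y' - dist y y' ≤ 0) :
    dist b z + dist b z' - dist z z' ≤ 0 := by
  have key : ∀ {u v w : M}, dist b w + dist w u = dist b u →
      dist b u + dist b v - dist u v ≤ 0 → dist b w + dist b v - dist w v ≤ 0 := by
    intro u v w hw h
    rcases min_le_iff.1 ((hM.min_gromov_le b u w v).trans h) with h' | h'
    · linarith [dist_triangle b w v, dist_comm u w]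
    · exact h'
  have := key (v := z) hz' (by linarith [key hz h, dist_comm z y'])
  linarith [dist_comm z z']

lemma gromov_nonpos_of_mem_branches {b y y' : M} {β β' : Set M} (hβ : β ∈ Branches b)
    (hβ' : β' ∈ Branches b) (hne : β ≠ β') (hy : y ∈ β) (hy' : y' ∈ β') :
    dist b y + dist b y' - dist y y' ≤ 0 := by
  obtain ⟨hyb, rfl⟩ := eq_connectedComponentIn_of_mem_branches hβ hy
  obtain ⟨hy'b, rfl⟩ := eq_connectedComponentIn_of_mem_branches hβ' hy'
  exact not_lt.1 fun h => hne ((hM.connectedComponentIn_eq_iff hyb hy'b).2 h)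

end IsRTree

/-- `BranchingCondition p r` unfolds to
`∀ x ε, 0 < ε → ∃ y₁ y₂ y₃, IsBranchingTriple x (r - dist p x) ε y₁ y₂ y₃`. -/
def IsBranchingTriple {M : Type*} [MetricSpace M] (x : M) (h ε : ℝ) (y₁ y₂ y₃ : M) : Prop :=
  |dist x y₁ - h| ≤ ε ∧ |dist x y₂ - h| ≤ ε ∧ |dist x y₃ - h| ≤ ε ∧
    dist x y₁ + dist x y₂ - dist y₁ y₂ ≤ ε ∧
    dist x y₁ + dist x y₃ - dist y₁ y₃ ≤ ε ∧
    dist x y₂ + dist x y₃ - dist y₂ y₃ ≤ ε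

lemma IsBranchingTriple.change_base {M : Type*} [MetricSpace M] {b x y₁ y₂ y₃ : M}
    {h h' ε ε' : ℝ} (hb : IsBranchingTriple b h ε y₁ y₂ y₃)
    (hε' : ε + 2 * dist x b + |h - h'| ≤ ε') : IsBranchingTriple x h' ε' y₁ y₂ y₃ := by
  obtain ⟨h₁, h₂, h₃, h₁₂, h₁₃, h₂₃⟩ := hb
  have hdist : ∀ y, |dist x y - h'| ≤ |dist b y - h| + 2 * dist x b + |h - h'| := fun y =>
    calc |dist x y - h'| = |(dist x y - dist b y) + (dist b y - h) + (h - h')| := by ring_nf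
      _ ≤ |dist x y - dist b y| + |dist b y - h| + |h - h'| := abs_add_three _ _ _
      _ ≤ _ := by linarith [abs_dist_sub_le x b y, dist_nonneg (x := x) (y := b)]
  have hgromov : ∀ y y', dist x y + dist x y' - dist y y' ≤
      dist b y + dist b y' - dist y y' + 2 * dist x b + |h - h'| := fun y y' => by
    linarith [dist_triangle x b y, dist_triangle x b y', abs_nonneg (h - h')]
  exact ⟨by linarith [hdist y₁], by linarith [hdist y₂], by linarith [hdist y₃],
    by linarith [hgromov y₁ y₂], by linarith [hgromov y₁ y₃], by linarith [hgromov y₂ y₃]⟩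

lemma isLUB_range_dist_of_branchingCondition {M : Type*} [MetricSpace M] {p : M} {r : ℝ}
    (hrad : ∀ x : M, dist p x ≤ r) (hbc : BranchingCondition p r) :
    IsLUB (range fun x : M => dist p x) r := by
  refine ⟨forall_mem_range.2 hrad, fun c hc => ?_⟩
  by_contra! hlt
  obtain ⟨y, -, -, hy, -⟩ := hbc p ((r - c) / 2) (by linarith)
  rw [dist_self, sub_zero] at hy
  linarith [(abs_le.1 hy).1, hc ⟨y, rfl⟩]

namespace IsRTree

variable {M : Type*} [MetricSpace M] (hM : IsRTree M)
include hM

lemma exists_isBranchingTriple_of_threeBranchesGE {b : M} {H ε : ℝ} (hH : 0 ≤ H) (hε : 0 < ε)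
    (h3 : ThreeBranchesGE b H) : ∃ z₁ z₂ z₃, IsBranchingTriple b H ε z₁ z₂ z₃ := by
  obtain ⟨β₁, β₂, β₃, hβ₁, hβ₂, hβ₃, h₁₂, h₁₃, h₂₃, hh₁, hh₂, hh₃⟩ := h3
  obtain ⟨y₁, hy₁, hd₁⟩ := hh₁ (H - ε) (by linarith)
  obtain ⟨y₂, hy₂, hd₂⟩ := hh₂ (H - ε) (by linarith)
  obtain ⟨y₃, hy₃, hd₃⟩ := hh₃ (H - ε) (by linarith)
  have htrunc : ∀ y : M, H - ε < dist b y →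
      ∃ z, dist b z + dist z y = dist b y ∧ |dist b z - H| ≤ ε := fun y hy => by
    have hseg := hM.isGeodesicSegmentFromTo_seg b y
    obtain ⟨z, hz, hbz⟩ := hseg.exists_mem_dist_left_eq
      (t := min (dist b y) H) ⟨le_min dist_nonneg hH, min_le_left _ _⟩
    refine ⟨z, hseg.dist_add_dist_eq hz, abs_le.2 ⟨?_, ?_⟩⟩ <;>
      linarith [min_le_right (dist b y) H, le_min hy.le (by linarith : H - ε ≤ H)]
  obtain ⟨z₁, hz₁, hd₁⟩ := htrunc y₁ hd₁
  obtain ⟨z₂, hz₂, hd₂⟩ := htrunc y₂ hd₂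
  obtain ⟨z₃, hz₃, hd₃⟩ := htrunc y₃ hd₃
  have hg : ∀ {y y' z z' : M} {β β' : Set M}, β ∈ Branches b → β' ∈ Branches b → β ≠ β' →
      y ∈ β → y' ∈ β' → dist b z + dist z y = dist b y → dist b z' + dist z' y' = dist b y' →
      dist b z + dist b z' - dist z z' ≤ ε := fun hβ hβ' hne hy hy' hz hz' =>
    (hM.gromov_nonpos_of_between hz hz'
      (hM.gromov_nonpos_of_mem_branches hβ hβ' hne hy hy')).trans hε.le
  exact ⟨z₁, z₂, z₃, hd₁, hd₂, hd₃, hg hβ₁ hβ₂ h₁₂ hy₁ hy₂ hz₁ hz₂,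
    hg hβ₁ hβ₃ h₁₃ hy₁ hy₃ hz₁ hz₃, hg hβ₂ hβ₃ h₂₃ hy₂ hy₃ hz₂ hz₃⟩

lemma branchingCondition_of_richlyBranchingAt {p : M} {r : ℝ} (hrad : ∀ x : M, dist p x ≤ r)
    (hrich : RichlyBranchingAt p r) : BranchingCondition p r := by
  intro x ε hε
  obtain ⟨b, hxb, hb⟩ := Metric.dense_iff.1 hrich x (ε / 4) (by positivity)
  rw [mem_ball, dist_comm] at hxb
  obtain ⟨y₁, y₂, y₃, hy⟩ :=
    hM.exists_isBranchingTriple_of_threeBranchesGE (ε := ε / 4) (sub_nonneg.2 (hrad b))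
      (by positivity) hb
  refine ⟨y₁, y₂, y₃, hy.change_base ?_⟩
  have : |r - dist p b - (r - dist p x)| ≤ dist x b := by
    rw [sub_sub_sub_cancel_left, dist_comm p x, dist_comm p b]
    exact abs_dist_sub_le x b p
  linarith

lemma exists_gromov_le_of_isBranchingTriple {y y₁ y₂ y₃ : M} {h ε : ℝ}
    (ht : IsBranchingTriple y h ε y₁ y₂ y₃) (b : M) :
    ∃ z, |dist y z - h| ≤ ε ∧ dist y b + dist y z - dist b z ≤ ε := by
  obtain ⟨h₁, h₂, -, h₁₂, -⟩ := ht
  rcases min_le_iff.1 ((hM.min_gromov_le y y₁ b y₂).trans h₁₂) with h | h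
  · exact ⟨y₁, h₁, by linarith [dist_comm y₁ b]⟩
  · exact ⟨y₂, h₂, h⟩

lemma heightGE_of_branchingCondition {p : M} {r : ℝ} (hbc : BranchingCondition p r) {b y : M}
    (hy : y ≠ b) : HeightGE b (connectedComponentIn {b}ᶜ y) (r - dist p b) := by
  intro h' hh'
  have hby : 0 < dist b y := dist_pos.2 hy.symm
  set ε := min ((r - dist p b - h') / 4) (dist b y)
  have hε : 0 < ε := lt_min (by linarith) hby
  obtain ⟨y₁, y₂, y₃, ht⟩ := hbc y ε hε
  obtain ⟨z, hz, hgz⟩ := hM.exists_gromov_le_of_isBranchingTriple ht b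
  have hε₁ : ε ≤ (r - dist p b - h') / 4 := min_le_left _ _
  have hε₂ : ε ≤ dist b y := min_le_right _ _
  have hyb := dist_comm y b
  have hzb : z ≠ b := by
    rintro rfl
    linarith [dist_self z]
  have hsame := (hM.connectedComponentIn_eq_iff hy hzb).2 (by linarith)
  refine ⟨z, hsame ▸ mem_connectedComponentIn hzb, ?_⟩
  linarith [(abs_le.1 hz).1, dist_triangle p b y]

lemma threeBranchesGE_of_median {p : M} {r : ℝ} (hbc : BranchingCondition p r)
    {b y₁ y₂ y₃ : M} (h₁₂ : dist y₁ y₂ = dist y₁ b + dist b y₂)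
    (h₁₃ : dist y₁ y₃ = dist y₁ b + dist b y₃) (h₂₃ : dist y₂ y₃ = dist y₂ b + dist b y₃)
    (hy₁ : y₁ ≠ b) (hy₂ : y₂ ≠ b) (hy₃ : y₃ ≠ b) : ThreeBranchesGE b (r - dist p b) := by
  have hne : ∀ {y y' : M}, y ≠ b → y' ≠ b → dist y y' = dist y b + dist b y' →
      connectedComponentIn {b}ᶜ y ≠ connectedComponentIn {b}ᶜ y' := by
    intro y y' hy hy' h heq
    have := (hM.connectedComponentIn_eq_iff hy hy').1 heq
    linarith [dist_comm y b]
  exact ⟨_, _, _, ⟨y₁, hy₁, rfl⟩, ⟨y₂, hy₂, rfl⟩, ⟨y₃, hy₃, rfl⟩, hne hy₁ hy₂ h₁₂,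
    hne hy₁ hy₃ h₁₃, hne hy₂ hy₃ h₂₃, hM.heightGE_of_branchingCondition hbc hy₁,
    hM.heightGE_of_branchingCondition hbc hy₂, hM.heightGE_of_branchingCondition hbc hy₃⟩

/-- Both `b` and the median of `x, y₁, y₂` lie on `[y₁, y₂]`; this gives
`2 dist x b ≤ g₁₂ + |g₁₃ - g₂₃|` for the Gromov products `gᵢⱼ` at `x`. -/
lemma dist_le_of_median_of_gromov_le {b y₁ y₂ y₃ : M} (h₁₂ : dist y₁ y₂ = dist y₁ b + dist b y₂)
    (h₁₃ : dist y₁ y₃ = dist y₁ b + dist b y₃) (h₂₃ : dist y₂ y₃ = dist y₂ b + dist b y₃)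
    {x : M} {ε : ℝ} (hg₁₂ : dist x y₁ + dist x y₂ - dist y₁ y₂ ≤ ε)
    (hg₁₃ : dist x y₁ + dist x y₃ - dist y₁ y₃ ≤ ε)
    (hg₂₃ : dist x y₂ + dist x y₃ - dist y₂ y₃ ≤ ε) : dist x b ≤ ε := by
  obtain ⟨m, hm₁, hm₂, hm₁₂⟩ := hM.exists_median x y₁ y₂
  have hmb := hM.dist_eq_abs_sub_of_between (a := y₁) (b := y₂) hm₁₂.symm h₁₂.symm
  have := dist_triangle x m b
  have := dist_triangle_left y₁ y₃ x
  have := dist_triangle_left y₂ y₃ x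
  rcases abs_cases (dist y₁ m - dist y₁ b) with ⟨h, -⟩ | ⟨h, -⟩ <;>
    linarith [dist_comm y₁ m, dist_comm y₂ b, dist_comm y₂ m, dist_comm y₁ b]

lemma exists_dist_le_and_min_le_sub_dist {p : M} {r δ : ℝ} (hrad : ∀ x : M, dist p x ≤ r)
    (hδ : 0 ≤ δ) (x : M) : ∃ x', dist x x' ≤ δ ∧ min δ r ≤ r - dist p x' := by
  have hseg := hM.isGeodesicSegmentFromTo_seg x p
  obtain ⟨x', hx', hxx'⟩ := hseg.exists_mem_dist_left_eq
    (t := min (dist x p) δ) ⟨le_min dist_nonneg hδ, min_le_left _ _⟩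
  have := hseg.dist_add_dist_eq hx'
  refine ⟨x', hxx' ▸ min_le_right _ _, ?_⟩
  rw [dist_comm p x']
  rcases min_cases (dist x p) δ with ⟨h, -⟩ | ⟨h, -⟩
  · linarith [min_le_right δ r]
  · linarith [min_le_left δ r, hrad x, dist_comm p x]

lemma richlyBranchingAt_of_branchingCondition {p : M} {r : ℝ} (hr : 0 < r)
    (hrad : ∀ x : M, dist p x ≤ r) (hbc : BranchingCondition p r) : RichlyBranchingAt p r := by
  refine Metric.dense_iff.2 fun x R hR => ?_
  set ρ := min (R / 2) r
  have hρ : 0 < ρ := lt_min (by linarith) hr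
  obtain ⟨x', hxx', hroom⟩ :=
    hM.exists_dist_le_and_min_le_sub_dist hrad (δ := R / 2) (by linarith) x
  obtain ⟨y₁, y₂, y₃, hy₁, hy₂, hy₃, hg₁₂, hg₁₃, hg₂₃⟩ := hbc x' (ρ / 4) (by positivity)
  obtain ⟨b, h₁₂, h₁₃, h₂₃⟩ := hM.exists_median y₁ y₂ y₃
  have hx'b := hM.dist_le_of_median_of_gromov_le h₁₂ h₁₃ h₂₃ hg₁₂ hg₁₃ hg₂₃
  have hne : ∀ y, |dist x' y - (r - dist p x')| ≤ ρ / 4 → y ≠ b := fun y hy hyb => by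
    subst hyb
    linarith [(abs_le.1 hy).1]
  refine ⟨b, ?_, hM.threeBranchesGE_of_median hbc h₁₂ h₁₃ h₂₃ (hne y₁ hy₁) (hne y₂ hy₂)
    (hne y₃ hy₃)⟩
  rw [mem_ball]
  linarith [dist_triangle b x' x, dist_comm b x', dist_comm x x', min_le_left (R / 2) r]

end IsRTree

theorem statement_10_general {M : Type*} [MetricSpace M]
    (r : ℝ) (hr : 0 < r) (hM : IsRTree M) (p : M)
    (hrad : ∀ x : M, dist p x ≤ r) :
    (BranchingCondition p r ↔ RichlyBranchingAt p r) ∧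
      (BranchingCondition p r → IsLUB (Set.range fun x : M => dist p x) r) :=
  ⟨⟨hM.richlyBranchingAt_of_branchingCondition hr hrad,
    hM.branchingCondition_of_richlyBranchingAt hrad⟩, isLUB_range_dist_of_branchingCondition hrad⟩

/-- A complete pointed ℝ-tree of radius ≤ `r` satisfies the
branching condition for radius `r` iff it is richly branching; and in that case
`sup {d(p,x) : x ∈ M} = r`, i.e. the radius is exactly `r`. -/
theorem statement_10 {M : Type*} [MetricSpace M] [CompleteSpace M]
    (r : ℝ) (hr : 0 < r) (hM : IsRTree M) (p : M)
    (hrad : ∀ x : M, dist p x ≤ r) :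
    (BranchingCondition p r ↔ RichlyBranchingAt p r) ∧
      (BranchingCondition p r → IsLUB (Set.range fun x : M => dist p x) r) :=
  statement_10_general r hr hM p hrad
end

section
/- Let M be an ℝ-tree and let A, B, C be nonempty subsets of M. For a nonempty subset S ⊆ M, let Ē_S denote the smallest closed subtree of M containing S. Suppose that for every a ∈ A, the nearest point to a in Ē_{B∪C} lies in Ē_C (equivalently, dist(a, Ē_{B∪C}) = dist(a, Ē_C)). Then for every b ∈ B, the nearest point to b in Ē_{A∪C} lies in Ē_C (equivalently, dist(b, Ē_{A∪C}) = dist(b, Ē_C)). -/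
/-!
Fix `b ∈ B`. As `Ē_C ⊆ Ē_{A∪C}`, it remains to show `dist(b, Ē_C) ≤ dist(b, x)` for
`x ∈ Ē_{A∪C}`. This is a closed condition on `x`, and `Ē_{A∪C}` lies in the closure of the
spanned subtree `E_{A∪C}`, so we may take `x` on a segment `[a, c]` with `a ∈ A`, `c ∈ Ē_C`.
By hypothesis the nearest point `p` of `a` in `Ē_{B∪C}` lies in `Ē_C`, and it lies on both
`[a, c]` and `[a, b]`. Either `x ∈ [p, c] ⊆ Ē_C`, or `x ∈ [a, p]`; then `p` lies between `x`
and `b`, so `dist(b, x) ≥ dist(b, p) ≥ dist(b, Ē_C)`.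
-/

open Set Metric

/-- `E` is the smallest closed subtree of `M` containing `A`. -/
def IsSmallestClosedSubtreeContaining {M : Type*} [MetricSpace M]
    (E A : Set M) : Prop :=
  IsClosed E ∧ IsRTree ↥E ∧ A ⊆ E ∧
    ∀ E' : Set M, IsClosed E' → IsRTree ↥E' → A ⊆ E' → E ⊆ E'

section Arcs

variable {M : Type*} [MetricSpace M]

lemma isGeodesicSegmentFromTo_image_Icc {γ : ℝ → M} {ℓ u v : ℝ}
    (hγ : ∀ s ∈ Icc (0:ℝ) ℓ, ∀ t ∈ Icc (0:ℝ) ℓ, dist (γ s) (γ t) = |s - t|)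
    (hu : 0 ≤ u) (huv : u ≤ v) (hv : v ≤ ℓ) :
    IsGeodesicSegmentFromTo (γ '' Icc u v) (γ u) (γ v) := by
  have hmem : ∀ t ∈ Icc (0:ℝ) (v - u), u + t ∈ Icc 0 ℓ := fun t ht =>
    ⟨by linarith [ht.1], by linarith [ht.2]⟩
  refine ⟨v - u, sub_nonneg.2 huv, fun t => γ (u + t), fun s hs t ht => ?_, by simp, by simp, ?_⟩
  · rw [hγ _ (hmem s hs) _ (hmem t ht), add_sub_add_left_eq_sub]
  · rw [← image_image γ (u + ·), image_const_add_Icc]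
    simp

variable {s : Set M} {a b : M}

lemma IsGeodesicSegmentFromTo.symm (hs : IsGeodesicSegmentFromTo s a b) :
    IsGeodesicSegmentFromTo s b a := by
  obtain ⟨ℓ, hℓ, γ, hγ, rfl, rfl, rfl⟩ := hs
  have hmem : ∀ t ∈ Icc (0:ℝ) ℓ, ℓ - t ∈ Icc 0 ℓ := fun t ht =>
    ⟨by linarith [ht.2], by linarith [ht.1]⟩
  refine ⟨ℓ, hℓ, fun t => γ (ℓ - t), fun u hu v hv => ?_, by simp, by simp, ?_⟩
  · rw [hγ _ (hmem u hu) _ (hmem v hv), sub_sub_sub_cancel_left, abs_sub_comm]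
  · rw [← image_image γ (ℓ - ·), image_const_sub_Icc]
    simp

lemma IsGeodesicSegmentFromTo.dist_add_dist (hs : IsGeodesicSegmentFromTo s a b) {x : M}
    (hx : x ∈ s) : dist a x + dist x b = dist a b := by
  obtain ⟨ℓ, hℓ, γ, hγ, rfl, rfl, rfl⟩ := hs
  obtain ⟨u, hu, rfl⟩ := hx
  have h0 : (0:ℝ) ∈ Icc 0 ℓ := ⟨le_rfl, hℓ⟩
  have hℓ' : ℓ ∈ Icc 0 ℓ := ⟨hℓ, le_rfl⟩
  rw [hγ _ h0 _ hu, hγ _ hu _ hℓ', hγ _ h0 _ hℓ']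
  simp only [zero_sub, abs_neg, abs_of_nonneg hu.1, abs_of_nonneg hℓ,
    abs_of_nonpos (sub_nonpos.2 hu.2)]
  ring

lemma IsGeodesicSegmentFromTo.exists_subset (hs : IsGeodesicSegmentFromTo s a b) {x y : M}
    (hx : x ∈ s) (hy : y ∈ s) : ∃ t ⊆ s, IsGeodesicSegmentFromTo t x y := by
  obtain ⟨ℓ, hℓ, γ, hγ, rfl, rfl, rfl⟩ := hs
  obtain ⟨u, hu, rfl⟩ := hx
  obtain ⟨v, hv, rfl⟩ := hy
  rcases le_total u v with huv | hvu
  · exact ⟨_, image_mono (Icc_subset_Icc hu.1 hv.2),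
      isGeodesicSegmentFromTo_image_Icc hγ hu.1 huv hv.2⟩
  · exact ⟨_, image_mono (Icc_subset_Icc hv.1 hu.2),
      (isGeodesicSegmentFromTo_image_Icc hγ hv.1 hvu hu.2).symm⟩

lemma IsGeodesicSegmentFromTo.exists_eq_union (hs : IsGeodesicSegmentFromTo s a b) {p : M}
    (hp : p ∈ s) : ∃ s₁ s₂, IsGeodesicSegmentFromTo s₁ a p ∧ IsGeodesicSegmentFromTo s₂ p b ∧
      s = s₁ ∪ s₂ := by
  obtain ⟨ℓ, hℓ, γ, hγ, rfl, rfl, rfl⟩ := hs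
  obtain ⟨u, hu, rfl⟩ := hp
  exact ⟨_, _, isGeodesicSegmentFromTo_image_Icc hγ le_rfl hu.1 hu.2,
    isGeodesicSegmentFromTo_image_Icc hγ hu.1 hu.2 le_rfl,
    by rw [← image_union, Icc_union_Icc_eq_Icc hu.1 hu.2]⟩

lemma IsGeodesicSegmentFromTo.isArcFromTo_s13 (hs : IsGeodesicSegmentFromTo s a b) :
    IsArcFromTo s a b := by
  obtain ⟨ℓ, hℓ, γ, hγ, h0, hℓ', rfl⟩ := hs
  refine ⟨ℓ, hℓ, γ, ?_, fun u hu v hv huv => ?_, h0, hℓ', rfl⟩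
  · exact (LipschitzOnWith.of_dist_le_mul (K := 1) fun u hu v hv => by
      simp [hγ u hu v hv, Real.dist_eq]).continuousOn
  · have := hγ u hu v hv
    rwa [huv, dist_self, eq_comm, abs_eq_zero, sub_eq_zero] at this

lemma IsArcFromTo.left_mem (hs : IsArcFromTo s a b) : a ∈ s := by
  obtain ⟨ℓ, hℓ, γ, -, -, rfl, -, rfl⟩ := hs
  exact mem_image_of_mem γ ⟨le_rfl, hℓ⟩

lemma IsArcFromTo.right_mem (hs : IsArcFromTo s a b) : b ∈ s := by
  obtain ⟨ℓ, hℓ, γ, -, -, -, rfl, rfl⟩ := hs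
  exact mem_image_of_mem γ ⟨hℓ, le_rfl⟩

lemma IsArcFromTo.isCompact (hs : IsArcFromTo s a b) : IsCompact s := by
  obtain ⟨ℓ, -, γ, hγ, -, -, -, rfl⟩ := hs
  exact isCompact_Icc.image_of_continuousOn hγ

lemma IsArcFromTo.image {N : Type*} [MetricSpace N] {f : M → N} (hf : Continuous f)
    (hinj : Function.Injective f) (hs : IsArcFromTo s a b) : IsArcFromTo (f '' s) (f a) (f b) := by
  obtain ⟨ℓ, hℓ, γ, hγc, hγi, rfl, rfl, rfl⟩ := hs
  exact ⟨ℓ, hℓ, f ∘ γ, hf.comp_continuousOn hγc, hinj.comp_injOn hγi, rfl, rfl,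
    (image_comp f γ _).symm⟩

lemma IsArcFromTo.union {t : Set M} {c : M} (hs : IsArcFromTo s a b) (ht : IsArcFromTo t b c)
    (hst : s ∩ t ⊆ {b}) : IsArcFromTo (s ∪ t) a c := by
  obtain ⟨ℓ₁, hℓ₁, γ₁, hc₁, hi₁, rfl, h₁ℓ, rfl⟩ := hs
  obtain ⟨ℓ₂, hℓ₂, γ₂, hc₂, hi₂, h₂0, rfl, rfl⟩ := ht
  set δ : ℝ → M := fun x => if x ≤ ℓ₁ then γ₁ x else γ₂ (x - ℓ₁)
  have hδ₁ : EqOn δ γ₁ (Icc 0 ℓ₁) := fun x hx => if_pos hx.2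
  have hδ₂ : EqOn δ (γ₂ ∘ (· - ℓ₁)) (Icc ℓ₁ (ℓ₁ + ℓ₂)) := by
    intro x hx
    rcases hx.1.eq_or_lt with rfl | hlt
    · simp [δ, h₁ℓ, h₂0]
    · simp [δ, not_le.2 hlt]
  have hshift : (· - ℓ₁) '' Icc ℓ₁ (ℓ₁ + ℓ₂) = Icc 0 ℓ₂ := by simp
  have hmaps : MapsTo (· - ℓ₁) (Icc ℓ₁ (ℓ₁ + ℓ₂)) (Icc 0 ℓ₂) := hshift ▸ mapsTo_image _ _
  have hsplit : Icc 0 (ℓ₁ + ℓ₂) = Icc 0 ℓ₁ ∪ Icc ℓ₁ (ℓ₁ + ℓ₂) :=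
    (Icc_union_Icc_eq_Icc hℓ₁ (by linarith)).symm
  have hcross : ∀ x ∈ Icc 0 ℓ₁, ∀ y ∈ Icc ℓ₁ (ℓ₁ + ℓ₂), δ x = δ y → x = y := by
    intro x hx y hy hxy
    rw [hδ₁ hx, hδ₂ hy] at hxy
    have hb : γ₁ x = b :=
      hst ⟨mem_image_of_mem γ₁ hx, hxy ▸ mem_image_of_mem γ₂ (hmaps hy)⟩
    have hb' : γ₂ (y - ℓ₁) = γ₂ 0 := by rw [h₂0, ← hb]; exact hxy.symm
    rw [hi₁ hx ⟨hℓ₁, le_rfl⟩ (hb.trans h₁ℓ.symm),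
      sub_eq_zero.1 (hi₂ (hmaps hy) ⟨le_rfl, hℓ₂⟩ hb')]
  have hi₂' : InjOn δ (Icc ℓ₁ (ℓ₁ + ℓ₂)) :=
    (hi₂.comp sub_left_injective.injOn hmaps).congr hδ₂.symm
  refine ⟨ℓ₁ + ℓ₂, add_nonneg hℓ₁ hℓ₂, δ, ?_, ?_, hδ₁ ⟨le_rfl, hℓ₁⟩, ?_, ?_⟩
  · rw [hsplit]
    exact (hc₁.congr hδ₁).union_of_isClosed
      ((hc₂.comp (continuousOn_id.sub continuousOn_const) hmaps).congr hδ₂)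
      isClosed_Icc isClosed_Icc
  · rw [hsplit]
    rintro x (hx | hx) y (hy | hy) hxy
    exacts [(hi₁.congr hδ₁.symm) hx hy hxy, hcross x hx y hy hxy, (hcross y hy x hx hxy.symm).symm,
      hi₂' hx hy hxy]
  · rw [hδ₂ ⟨by linarith, le_rfl⟩]
    simp
  · rw [hsplit, image_union, hδ₁.image_eq, hδ₂.image_eq, image_comp, hshift]

end Arcs

section RTree

variable {M : Type*} [MetricSpace M] (h : IsRTree M)

lemma isArcFromTo_seg (a b : M) : IsArcFromTo (seg h a b) a b := (h a b).choose_spec.1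

lemma isGeodesicSegmentFromTo_seg (a b : M) : IsGeodesicSegmentFromTo (seg h a b) a b :=
  (h a b).choose_spec.2.1

lemma eq_seg_of_isArcFromTo {s : Set M} {a b : M} (hs : IsArcFromTo s a b) : s = seg h a b :=
  (h a b).choose_spec.2.2 s hs

lemma left_mem_seg (a b : M) : a ∈ seg h a b := (isArcFromTo_seg h a b).left_mem

lemma right_mem_seg (a b : M) : b ∈ seg h a b := (isArcFromTo_seg h a b).right_mem

lemma isCompact_seg (a b : M) : IsCompact (seg h a b) := (isArcFromTo_seg h a b).isCompact

lemma dist_add_dist_of_mem_seg {a b x : M} (hx : x ∈ seg h a b) :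
    dist a x + dist x b = dist a b :=
  (isGeodesicSegmentFromTo_seg h a b).dist_add_dist hx

lemma seg_comm (a b : M) : seg h a b = seg h b a :=
  eq_seg_of_isArcFromTo h (isGeodesicSegmentFromTo_seg h a b).symm.isArcFromTo_s13

lemma seg_subset_seg {a b x y : M} (hx : x ∈ seg h a b) (hy : y ∈ seg h a b) :
    seg h x y ⊆ seg h a b := by
  obtain ⟨t, hts, ht⟩ := (isGeodesicSegmentFromTo_seg h a b).exists_subset hx hy
  rwa [← eq_seg_of_isArcFromTo h ht.isArcFromTo_s13]

lemma seg_eq_union_of_mem {a b p : M} (hp : p ∈ seg h a b) :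
    seg h a b = seg h a p ∪ seg h p b := by
  obtain ⟨s₁, s₂, h₁, h₂, hs⟩ := (isGeodesicSegmentFromTo_seg h a b).exists_eq_union hp
  rw [hs, eq_seg_of_isArcFromTo h h₁.isArcFromTo_s13, eq_seg_of_isArcFromTo h h₂.isArcFromTo_s13]

lemma dist_eq_dist_add_dist_of_mem_seg {a b p x : M} (hp : p ∈ seg h a b)
    (hx : x ∈ seg h p b) : dist a x = dist a p + dist p x := by
  have hxab : x ∈ seg h a b := seg_subset_seg h hp (right_mem_seg h a b) hx
  linarith [dist_add_dist_of_mem_seg h hp, dist_add_dist_of_mem_seg h hx,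
    dist_add_dist_of_mem_seg h hxab]

/-- `m` is the point of `[z, a] ∩ [z, b]` farthest from `z`; uniqueness of arcs makes
`[a, m] ∪ [m, b]` the segment `[a, b]`. -/
lemma exists_median (z a b : M) :
    ∃ m ∈ seg h z a ∩ seg h z b, seg h a b = seg h a m ∪ seg h m b := by
  obtain ⟨m, hm, hmax⟩ := ((isCompact_seg h z a).inter_right (isCompact_seg h z b).isClosed)
    |>.exists_isMaxOn ⟨z, left_mem_seg h z a, left_mem_seg h z b⟩
      (continuous_const.dist continuous_id).continuousOn
  refine ⟨m, hm, (eq_seg_of_isArcFromTo h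
    ((isArcFromTo_seg h a m).union (isArcFromTo_seg h m b) ?_)).symm⟩
  rintro x ⟨hxa, hxb⟩
  rw [seg_comm h a m] at hxa
  have hx : x ∈ seg h z a ∩ seg h z b := ⟨seg_subset_seg h hm.1 (right_mem_seg h z a) hxa,
    seg_subset_seg h hm.2 (right_mem_seg h z b) hxb⟩
  have hzx : dist z x ≤ dist z m := isMaxOn_iff.1 hmax x hx
  rw [dist_eq_dist_add_dist_of_mem_seg h hm.1 hxa] at hzx
  exact (dist_le_zero.1 (by linarith)).symm

lemma seg_subset_union (z a b : M) : seg h a b ⊆ seg h z a ∪ seg h z b := by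
  obtain ⟨m, hm, hab⟩ := exists_median h z a b
  rw [hab, seg_comm h a m]
  exact union_subset_union (seg_subset_seg h hm.1 (right_mem_seg h z a))
    (seg_subset_seg h hm.2 (right_mem_seg h z b))

def SegConvex (E : Set M) : Prop := ∀ x ∈ E, ∀ y ∈ E, seg h x y ⊆ E

variable {h} {E : Set M}

lemma segConvex_of_isRTree (hE : IsRTree E) : SegConvex h E := by
  intro x hx y hy
  obtain ⟨s, hs, -, -⟩ := hE ⟨x, hx⟩ ⟨y, hy⟩
  rw [← eq_seg_of_isArcFromTo h (hs.image continuous_subtype_val Subtype.val_injective)]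
  exact Subtype.coe_image_subset E s

lemma SegConvex.isRTree (hE : SegConvex h E) : IsRTree E := by
  intro x y
  obtain ⟨ℓ, hℓ, γ, hγ, h0, hℓ', hseg⟩ := isGeodesicSegmentFromTo_seg h x y
  have hmem : ∀ t : Icc (0:ℝ) ℓ, γ t ∈ E := fun t =>
    hE x x.2 y y.2 (hseg ▸ mem_image_of_mem γ t.2)
  set γ' : ℝ → E := IccExtend hℓ fun t => ⟨γ t, hmem t⟩
  have hγ' : ∀ t ∈ Icc 0 ℓ, (γ' t : M) = γ t := fun t ht => by
    simp [γ', IccExtend_of_mem _ _ ht]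
  have hgeo : IsGeodesicSegmentFromTo (γ' '' Icc 0 ℓ) x y :=
    ⟨ℓ, hℓ, γ', fun u hu v hv => by rw [Subtype.dist_eq, hγ' u hu, hγ' v hv, hγ u hu v hv],
      Subtype.ext (by rw [hγ' 0 ⟨le_rfl, hℓ⟩, h0]), Subtype.ext (by rw [hγ' ℓ ⟨hℓ, le_rfl⟩, hℓ']),
      rfl⟩
  have hval : Subtype.val '' (γ' '' Icc 0 ℓ) = seg h x y := by
    rw [image_image, hseg]
    exact image_congr hγ'
  refine ⟨_, hgeo.isArcFromTo_s13, hgeo, fun t ht => Subtype.val_injective.image_injective ?_⟩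
  rw [hval]
  exact eq_seg_of_isArcFromTo h (ht.image continuous_subtype_val Subtype.val_injective)

lemma SegConvex.closure (hE : SegConvex h E) : SegConvex h (closure E) := by
  intro x hx y hy z hz
  refine Metric.mem_closure_iff.2 fun ε hε => ?_
  obtain ⟨x', hx', hxx'⟩ := Metric.mem_closure_iff.1 hx (ε / 2) (half_pos hε)
  obtain ⟨y', hy', hyy'⟩ := Metric.mem_closure_iff.1 hy (ε / 2) (half_pos hε)
  obtain ⟨m, ⟨hmx, hmy⟩, hxy⟩ := exists_median h z x' y'
  have hm : m ∈ seg h x' y' := hxy ▸ Or.inl (right_mem_seg h x' m)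
  refine ⟨m, hE x' hx' y' hy' hm, ?_⟩
  -- `2 dist z m = dist z x' + dist z y' - dist x' y'`, and `z ∈ [x, y]`
  linarith [dist_add_dist_of_mem_seg h hz, dist_add_dist_of_mem_seg h hmx,
    dist_add_dist_of_mem_seg h hmy, dist_add_dist_of_mem_seg h hm, dist_triangle z x x',
    dist_triangle z y y', dist_triangle4 x x' y' y, dist_comm x z, dist_comm y z, dist_comm x' m,
    dist_comm y y']

lemma SegConvex.exists_forall_dist_le (hE : SegConvex h E) (hcl : IsClosed E)
    (hne : E.Nonempty) (a : M) : ∃ p ∈ E, ∀ e ∈ E, dist a p ≤ dist a e := by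
  obtain ⟨e₀, he₀⟩ := hne
  obtain ⟨p, hp, hmin⟩ := ((isCompact_seg h a e₀).inter_right hcl).exists_isMinOn
    ⟨e₀, right_mem_seg h a e₀, he₀⟩ (continuous_const.dist continuous_id).continuousOn
  refine ⟨p, hp.2, fun e he => ?_⟩
  -- the median of `a, e₀, e` is a point of `[a, e₀] ∩ E` no farther from `a` than `e`
  obtain ⟨m, ⟨hm₀, hme⟩, he₀e⟩ := exists_median h a e₀ e
  have hmE : m ∈ E := hE e₀ he₀ e he (he₀e ▸ Or.inl (right_mem_seg h e₀ m))
  calc dist a p ≤ dist a m := isMinOn_iff.1 hmin m ⟨hm₀, hmE⟩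
    _ ≤ dist a e := by linarith [dist_add_dist_of_mem_seg h hme, dist_nonneg (x := m) (y := e)]

lemma SegConvex.exists_nearest (hE : SegConvex h E) (hcl : IsClosed E) (hne : E.Nonempty)
    (a : M) : ∃ p ∈ E, dist a p = infDist a E ∧ ∀ e ∈ E, p ∈ seg h a e := by
  obtain ⟨p, hp, hmin⟩ := hE.exists_forall_dist_le hcl hne a
  refine ⟨p, hp, le_antisymm ((le_infDist hne).2 hmin) (infDist_le_dist_of_mem hp),
    fun e he => ?_⟩
  obtain ⟨m, ⟨hmp, hme⟩, hpe⟩ := exists_median h a p e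
  have hmE : m ∈ E := hE p hp e he (hpe ▸ Or.inl (right_mem_seg h p m))
  have hpm : dist a p ≤ dist a m := hmin m hmE
  have hmp' : m = p := dist_le_zero.1 (by linarith [dist_add_dist_of_mem_seg h hmp])
  exact hmp' ▸ hme

end RTree

section SpannedSubtree

variable {M : Type*} [MetricSpace M] (h : IsRTree M)

def spannedSubtree (S : Set M) : Set M := ⋃ s ∈ S, ⋃ t ∈ S, seg h s t

lemma mem_spannedSubtree {S : Set M} {x : M} :
    x ∈ spannedSubtree h S ↔ ∃ s ∈ S, ∃ t ∈ S, x ∈ seg h s t := by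
  simp [spannedSubtree]

lemma subset_spannedSubtree (S : Set M) : S ⊆ spannedSubtree h S := fun s hs =>
  (mem_spannedSubtree h).2 ⟨s, hs, s, hs, left_mem_seg h s s⟩

lemma segConvex_spannedSubtree (S : Set M) : SegConvex h (spannedSubtree h S) := by
  intro x hx y hy z hz
  obtain ⟨s, hs, t, ht, hxst⟩ := (mem_spannedSubtree h).1 hx
  obtain ⟨u, hu, v, hv, hyuv⟩ := (mem_spannedSubtree h).1 hy
  refine (mem_spannedSubtree h).2 ?_
  rcases seg_subset_union h s x y hz with hz | hz
  · exact ⟨s, hs, t, ht, seg_subset_seg h (left_mem_seg h s t) hxst hz⟩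
  rcases seg_subset_union h u s y hz with hz | hz
  · exact ⟨s, hs, u, hu, seg_comm h u s ▸ hz⟩
  · exact ⟨u, hu, v, hv, seg_subset_seg h (left_mem_seg h u v) hyuv hz⟩

lemma mem_or_exists_mem_seg_of_mem_spannedSubtree_union {A S E : Set M} (hSE : S ⊆ E)
    (hE : SegConvex h E) (hne : E.Nonempty) {x : M} (hx : x ∈ spannedSubtree h (A ∪ S)) :
    x ∈ E ∨ ∃ a ∈ A, ∃ e ∈ E, x ∈ seg h a e := by
  obtain ⟨s, hs, t, ht, hx⟩ := (mem_spannedSubtree h).1 hx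
  rcases hs with hs | hs <;> rcases ht with ht | ht
  · obtain ⟨e, he⟩ := hne
    rcases seg_subset_union h e s t hx with hx | hx
    · exact Or.inr ⟨s, hs, e, he, seg_comm h e s ▸ hx⟩
    · exact Or.inr ⟨t, ht, e, he, seg_comm h e t ▸ hx⟩
  · exact Or.inr ⟨s, hs, t, hSE ht, hx⟩
  · exact Or.inr ⟨t, ht, s, hSE hs, seg_comm h s t ▸ hx⟩
  · exact Or.inl (hE s (hSE hs) t (hSE ht) hx)

end SpannedSubtree

namespace IsSmallestClosedSubtreeContaining

variable {M : Type*} [MetricSpace M] (h : IsRTree M) {E F S T : Set M}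

lemma segConvex (hE : IsSmallestClosedSubtreeContaining E S) : SegConvex h E :=
  segConvex_of_isRTree hE.2.1

lemma mono (hE : IsSmallestClosedSubtreeContaining E S)
    (hF : IsSmallestClosedSubtreeContaining F T) (hST : S ⊆ T) : E ⊆ F :=
  hE.2.2.2 F hF.1 hF.2.1 (hST.trans hF.2.2.1)

lemma subset_closure_spannedSubtree (hE : IsSmallestClosedSubtreeContaining E S) :
    E ⊆ closure (spannedSubtree h S) :=
  hE.2.2.2 _ isClosed_closure (segConvex_spannedSubtree h S).closure.isRTree
    ((subset_spannedSubtree h S).trans subset_closure)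

end IsSmallestClosedSubtreeContaining

lemma infDist_le_dist_of_mem_seg {M : Type*} [MetricSpace M] {h : IsRTree M} {E F : Set M}
    (hE : SegConvex h E) (hEcl : IsClosed E) (hEne : E.Nonempty) (hF : SegConvex h F)
    (hFcl : IsClosed F) (hEF : E ⊆ F) {a b c x : M}
    (ha : infDist a F = infDist a E) (hb : b ∈ F) (hc : c ∈ E) (hx : x ∈ seg h a c) :
    infDist b E ≤ dist b x := by
  obtain ⟨p, hpF, hpd, hpseg⟩ := hF.exists_nearest hFcl (hEne.mono hEF) a
  obtain ⟨q, hqE, hqd, -⟩ := hE.exists_nearest hEcl hEne a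
  -- `p ∈ [a, q]` and `dist a p = infDist a F = infDist a E = dist a q`
  have hpE : p ∈ E := by
    have hpq : dist p q = 0 := by
      linarith [dist_add_dist_of_mem_seg h (hpseg q (hEF hqE)), dist_nonneg (x := p) (y := q)]
    rwa [dist_eq_zero.1 hpq]
  rcases seg_eq_union_of_mem h (hpseg c (hEF hc)) ▸ hx with hx | hx
  · rw [seg_comm] at hx
    have hpb : p ∈ seg h b a := seg_comm h a b ▸ hpseg b hb
    calc infDist b E ≤ dist b p := infDist_le_dist_of_mem hpE
      _ ≤ dist b x := by
        rw [dist_eq_dist_add_dist_of_mem_seg h hpb hx]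
        exact le_add_of_nonneg_right dist_nonneg
  · exact infDist_le_dist_of_mem (hE p hpE c hc hx)

theorem statement_13_general {M : Type*} [MetricSpace M] (hM : IsRTree M)
    (A B C : Set M) (hC : C.Nonempty)
    (EBC EAC EC : Set M)
    (hEBC : IsSmallestClosedSubtreeContaining EBC (B ∪ C))
    (hEAC : IsSmallestClosedSubtreeContaining EAC (A ∪ C))
    (hEC : IsSmallestClosedSubtreeContaining EC C)
    (hind : ∀ a ∈ A, Metric.infDist a EBC = Metric.infDist a EC) :
    ∀ b ∈ B, Metric.infDist b EAC = Metric.infDist b EC := by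
  intro b hb
  have hECne : EC.Nonempty := hC.mono hEC.2.2.1
  have hECAC : EC ⊆ EAC := hEC.mono hEAC subset_union_right
  refine le_antisymm (infDist_le_infDist_of_subset hECAC hECne)
    ((le_infDist (hECne.mono hECAC)).2 fun y hy => ?_)
  have hclosed : IsClosed {x | infDist b EC ≤ dist b x} :=
    isClosed_le continuous_const (continuous_const.dist continuous_id)
  refine closure_minimal (fun x hx => ?_) hclosed (hEAC.subset_closure_spannedSubtree hM hy)
  rcases mem_or_exists_mem_seg_of_mem_spannedSubtree_union hM hEC.2.2.1 (hEC.segConvex hM)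
    hECne hx with hx | ⟨a, ha, c, hc, hx⟩
  · exact infDist_le_dist_of_mem hx
  · exact infDist_le_dist_of_mem_seg (hEC.segConvex hM) hEC.1 hECne (hEBC.segConvex hM) hEBC.1
      (hEC.mono hEBC subset_union_right) (hind a ha) (hEBC.2.2.1 (Or.inl hb)) hc hx

/-- Symmetry of the independence relation: if every `a ∈ A` is as
close to `Ē_C` as to `Ē_{B∪C}`, then every `b ∈ B` is as close to `Ē_C` as to
`Ē_{A∪C}`. -/
theorem statement_13 {M : Type*} [MetricSpace M] (hM : IsRTree M)
    (A B C : Set M) (hA : A.Nonempty) (hB : B.Nonempty) (hC : C.Nonempty)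
    (EBC EAC EC : Set M)
    (hEBC : IsSmallestClosedSubtreeContaining EBC (B ∪ C))
    (hEAC : IsSmallestClosedSubtreeContaining EAC (A ∪ C))
    (hEC : IsSmallestClosedSubtreeContaining EC C)
    (hind : ∀ a ∈ A, Metric.infDist a EBC = Metric.infDist a EC) :
    ∀ b ∈ B, Metric.infDist b EAC = Metric.infDist b EC :=
  statement_13_general hM A B C hC EBC EAC EC hEBC hEAC hEC hind
end

section
/- Let r > 0, let κ be an infinite cardinal, and let (M,d,p) be a complete richly branching pointed ℝ-tree of radius r such that M has at least κ branches at every point a with d(p,a) < r. Let K be a nonempty finitely spanned ℝ-tree with a designated point q. Let e ∈ M satisfy r − d(p,e) ≥ sup{d(q,x) : x ∈ K}, and let {β_i : i < α} be a collection of branches at e with α < κ. Then there exists an isometric embedding f : K → M such that f(q) = e and the image f(K) is disjoint from β_i for every i < α. -/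
open Set Metric

universe u

/-- `B` spans the ℝ-tree `M` if `M` is the union of the segments with endpoints in `B`. -/
def Spans {M : Type*} [MetricSpace M] (h : IsRTree M) (B : Set M) : Prop :=
  ∀ x : M, ∃ b₁ ∈ B, ∃ b₂ ∈ B, x ∈ seg h b₁ b₂

/-! Embed `K` one spanning point at a time. Suppose `f` already embeds the hull `T` of finitely
many points of `K`, and `b` is a new point. Let `y` be the gate of `b` in `T`, its nearest
point; then the hull grows by `[y, b]`, and every geodesic from `T` to `[y, b]` passes through
`y`. Fewer than `κ` branches at `f y` meet `f(T)` or one of the `β i`, so some other branch is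
available. Points near the dense branching points can be pushed further out, and completeness
turns this into a point of that branch at distance exactly `d(y, b)` from `f y`; there is room
for it because `d(q, b) ≤ r - d(p, e)`. Sending `[y, b]` onto the segment towards that point
extends `f` isometrically, since on both sides distances between the two pieces add up through
`y`. -/

open Filter Topology

section IsometricOn

variable {α β : Type*} [PseudoMetricSpace α] [PseudoMetricSpace β]

def IsometricOn (f : α → β) (s : Set α) : Prop :=
  ∀ x ∈ s, ∀ y ∈ s, dist (f x) (f y) = dist x y

theorem IsometricOn.continuousOn {f : α → β} {s : Set α} (hf : IsometricOn f s) :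
    ContinuousOn f s :=
  LipschitzOnWith.continuousOn (K := 1) fun x hx y hy => by
    rw [edist_dist, edist_dist, hf x hx y hy, ENNReal.coe_one, one_mul]

theorem IsometricOn.piecewise {f g : α → β} {s t : Set α} [DecidablePred (· ∈ s)]
    (hf : IsometricOn f s) (hg : IsometricOn g t)
    (hfg : ∀ x ∈ s, ∀ y ∈ t, dist (f x) (g y) = dist x y) :
    IsometricOn (s.piecewise f g) (s ∪ t) := by
  have hst : ∀ x ∈ s ∪ t, x ∉ s → x ∈ t := fun x hx hxs => hx.resolve_left hxs
  intro x hx y hy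
  by_cases hxs : x ∈ s <;> by_cases hys : y ∈ s
  · rw [piecewise_eq_of_mem _ _ _ hxs, piecewise_eq_of_mem _ _ _ hys]
    exact hf x hxs y hys
  · rw [piecewise_eq_of_mem _ _ _ hxs, piecewise_eq_of_notMem _ _ _ hys]
    exact hfg x hxs y (hst y hy hys)
  · rw [piecewise_eq_of_notMem _ _ _ hxs, piecewise_eq_of_mem _ _ _ hys, dist_comm, dist_comm x]
    exact hfg y hys x (hst x hx hxs)
  · rw [piecewise_eq_of_notMem _ _ _ hxs, piecewise_eq_of_notMem _ _ _ hys]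
    exact hg x (hst x hx hxs) y (hst y hy hys)

end IsometricOn

theorem IsometricOn.injOn {α β : Type*} [MetricSpace α] [PseudoMetricSpace β] {f : α → β}
    {s : Set α} (hf : IsometricOn f s) : InjOn f s := fun x hx y hy hxy => by
  rw [← dist_eq_zero, ← hf x hx y hy, hxy, dist_self]

theorem dist_eq_of_isometricOn_Icc {X : Type*} [PseudoMetricSpace X] {γ : ℝ → X} {ℓ t : ℝ}
    (hγ : IsometricOn γ (Icc 0 ℓ)) (ht : t ∈ Icc 0 ℓ) : dist (γ 0) (γ t) = t := by
  rw [hγ 0 ⟨le_rfl, ht.1.trans ht.2⟩ t ht, Real.dist_eq, zero_sub, abs_neg, abs_of_nonneg ht.1]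

namespace IsRTree

variable {X : Type*} [MetricSpace X] (h : IsRTree X)
include h

theorem exists_param (a b : X) : ∃ γ : ℝ → X, Continuous γ ∧
    IsometricOn γ (Icc 0 (dist a b)) ∧ γ 0 = a ∧ γ (dist a b) = b ∧
      seg h a b = γ '' Icc 0 (dist a b) := by
  obtain ⟨ℓ, hℓ, γ, hiso, hγ0, hγℓ, hs⟩ := (h a b).choose_spec.2.1
  have hγ : IsometricOn γ (Icc 0 ℓ) := fun u hu v hv => by rw [hiso u hu v hv, Real.dist_eq]
  obtain rfl : dist a b = ℓ := by
    rw [← hγ0, ← hγℓ, dist_eq_of_isometricOn_Icc hγ ⟨hℓ, le_rfl⟩]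
  have hclamp : ∀ t ∈ Icc 0 (dist a b), projIcc 0 (dist a b) hℓ t = t := fun t ht => by
    rw [projIcc_of_mem hℓ ht]
  refine ⟨fun t => γ (projIcc 0 (dist a b) hℓ t), ?_, ?_, ?_, ?_, ?_⟩
  · exact hγ.continuousOn.comp_continuous (continuous_subtype_val.comp continuous_projIcc)
      fun t => Subtype.mem _
  · intro u hu v hv
    simp only [hclamp u hu, hclamp v hv]
    exact hγ u hu v hv
  · simp only [hclamp 0 ⟨le_rfl, hℓ⟩, hγ0]
  · simp only [hclamp (dist a b) ⟨hℓ, le_rfl⟩, hγℓ]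
  · exact hs.trans (image_congr fun t ht => by simp only [hclamp t ht])

theorem seg_eq_of_isArcFromTo {s : Set X} {a b : X} (hs : IsArcFromTo s a b) : s = seg h a b :=
  (h a b).choose_spec.2.2 s hs

theorem left_mem_seg (a b : X) : a ∈ seg h a b := by
  obtain ⟨γ, -, -, hγ0, -, hs⟩ := h.exists_param a b
  exact hs ▸ ⟨0, ⟨le_rfl, dist_nonneg⟩, hγ0⟩

theorem right_mem_seg (a b : X) : b ∈ seg h a b := by
  obtain ⟨γ, -, -, -, hγℓ, hs⟩ := h.exists_param a b
  exact hs ▸ ⟨dist a b, ⟨dist_nonneg, le_rfl⟩, hγℓ⟩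

theorem seg_self (a : X) : seg h a a = {a} := by
  obtain ⟨γ, -, -, hγ0, -, hs⟩ := h.exists_param a a
  rw [hs, dist_self, Icc_self, image_singleton, hγ0]

theorem isConnected_seg (a b : X) : IsConnected (seg h a b) := by
  obtain ⟨γ, hγ, -, -, -, hs⟩ := h.exists_param a b
  exact hs ▸ (isConnected_Icc dist_nonneg).image γ hγ.continuousOn

theorem isCompact_seg (a b : X) : IsCompact (seg h a b) := by
  obtain ⟨γ, hγ, -, -, -, hs⟩ := h.exists_param a b
  exact hs ▸ isCompact_Icc.image hγ

theorem exists_mem_seg_dist_eq {a b : X} {t : ℝ} (ht : t ∈ Icc 0 (dist a b)) :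
    ∃ z ∈ seg h a b, dist a z = t := by
  obtain ⟨γ, -, hγ, hγ0, -, hs⟩ := h.exists_param a b
  exact ⟨γ t, hs ▸ mem_image_of_mem γ ht, hγ0 ▸ dist_eq_of_isometricOn_Icc hγ ht⟩

theorem dist_eq_abs_sub_of_mem_seg {a b x y : X} (hx : x ∈ seg h a b) (hy : y ∈ seg h a b) :
    dist x y = |dist a x - dist a y| := by
  obtain ⟨γ, -, hγ, hγ0, -, hs⟩ := h.exists_param a b
  rw [hs] at hx hy
  obtain ⟨s, hs', rfl⟩ := hx
  obtain ⟨t, ht, rfl⟩ := hy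
  rw [← hγ0, dist_eq_of_isometricOn_Icc hγ hs', dist_eq_of_isometricOn_Icc hγ ht, hγ s hs' t ht,
    Real.dist_eq]

theorem dist_add_dist_of_mem_seg {a b z : X} (hz : z ∈ seg h a b) :
    dist a z + dist z b = dist a b := by
  obtain ⟨γ, -, hγ, hγ0, hγℓ, hs⟩ := h.exists_param a b
  rw [hs] at hz
  obtain ⟨t, ht, rfl⟩ := hz
  have hat := dist_eq_of_isometricOn_Icc hγ ht
  have htb := hγ t ht _ ⟨dist_nonneg, le_rfl⟩
  rw [hγ0] at hat
  rw [hγℓ] at htb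
  rw [hat, htb, Real.dist_eq, abs_of_nonpos (by linarith [ht.2])]
  ring

theorem seg_comm (a b : X) : seg h a b = seg h b a := by
  obtain ⟨γ, hγc, hγ, hγ0, hγℓ, hs⟩ := h.exists_param a b
  have hrev : MapsTo (fun t => dist a b - t) (Icc 0 (dist a b)) (Icc 0 (dist a b)) :=
    fun t ht => ⟨sub_nonneg.2 ht.2, sub_le_self _ ht.1⟩
  refine h.seg_eq_of_isArcFromTo ⟨dist a b, dist_nonneg, γ ∘ fun t => dist a b - t,
    (hγc.comp (continuous_sub_left _)).continuousOn,
    hγ.injOn.comp sub_right_injective.injOn hrev, ?_, ?_, ?_⟩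
  · simp [hγℓ]
  · simp [hγ0]
  · rw [hs, image_comp, image_const_sub_Icc, sub_self, sub_zero]

theorem seg_eq_union_of_inter_subset {a z b : X} (hz : seg h a z ∩ seg h z b ⊆ {z}) :
    seg h a b = seg h a z ∪ seg h z b := by
  classical
  obtain ⟨γ₁, hc₁, hγ₁, h10, h1ℓ, hs₁⟩ := h.exists_param a z
  obtain ⟨γ₂, hc₂, hγ₂, h20, h2ℓ, hs₂⟩ := h.exists_param z b
  set ℓ₁ := dist a z
  set ℓ₂ := dist z b
  have hℓ₁ : 0 ≤ ℓ₁ := dist_nonneg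
  have hℓ₂ : 0 ≤ ℓ₂ := dist_nonneg
  let θ : ℝ → X := fun t => if t ≤ ℓ₁ then γ₁ t else γ₂ (t - ℓ₁)
  have hθ₁ : EqOn θ γ₁ (Icc 0 ℓ₁) := fun t ht => if_pos ht.2
  have hθ₂ : EqOn θ (γ₂ ∘ fun t => t - ℓ₁) (Icc ℓ₁ (ℓ₁ + ℓ₂)) := fun t ht => by
    rcases ht.1.eq_or_lt with rfl | hlt
    · simp [θ, h1ℓ, h20]
    · simp [θ, not_le.2 hlt]
  -- `pos` reads off the parameter of a point of `θ`, which makes `θ` injective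
  let pos : X → ℝ := fun x => if x ∈ seg h a z then dist a x else ℓ₁ + dist z x
  have hpos : LeftInvOn pos θ (Icc 0 (ℓ₁ + ℓ₂)) := by
    intro t ht
    rcases le_total t ℓ₁ with ht₁ | ht₁
    · have hθt : θ t ∈ seg h a z := hθ₁ ⟨ht.1, ht₁⟩ ▸ hs₁ ▸ mem_image_of_mem _ ⟨ht.1, ht₁⟩
      simp only [pos]
      rw [if_pos hθt, hθ₁ ⟨ht.1, ht₁⟩, ← h10]
      exact dist_eq_of_isometricOn_Icc hγ₁ ⟨ht.1, ht₁⟩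
    · have hmem : t - ℓ₁ ∈ Icc 0 ℓ₂ := ⟨sub_nonneg.2 ht₁, by linarith [ht.2]⟩
      have hθt : θ t = γ₂ (t - ℓ₁) := hθ₂ ⟨ht₁, ht.2⟩
      have hzθ : dist z (θ t) = t - ℓ₁ := by
        rw [hθt, ← h20]
        exact dist_eq_of_isometricOn_Icc hγ₂ hmem
      by_cases hθaz : θ t ∈ seg h a z
      · have hθz : θ t = z := hz ⟨hθaz, hθt ▸ hs₂ ▸ mem_image_of_mem _ hmem⟩
        rw [hθz, dist_self] at hzθ
        simp only [pos]
        rw [if_pos hθaz, hθz]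
        linarith
      · simp only [pos]
        rw [if_neg hθaz, hzθ]
        ring
  have harc : IsArcFromTo (seg h a z ∪ seg h z b) a b := by
    refine ⟨ℓ₁ + ℓ₂, by positivity, θ, ?_, hpos.injOn, ?_, ?_, ?_⟩
    · exact (Continuous.if_le hc₁ (hc₂.comp (continuous_sub_right ℓ₁)) continuous_id
        continuous_const fun t (ht : t = ℓ₁) => by
          rw [ht, h1ℓ, Function.comp_apply, sub_self, h20]).continuousOn
    · rw [hθ₁ ⟨le_rfl, hℓ₁⟩, h10]
    · rw [hθ₂ ⟨le_add_of_nonneg_right hℓ₂, le_rfl⟩, Function.comp_apply, add_sub_cancel_left,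
        h2ℓ]
    · rw [← Icc_union_Icc_eq_Icc hℓ₁ (le_add_of_nonneg_right hℓ₂), image_union, hθ₁.image_eq,
        hθ₂.image_eq, image_comp, image_sub_const_Icc, sub_self, add_sub_cancel_left, hs₁, hs₂]
  exact (h.seg_eq_of_isArcFromTo harc).symm

theorem seg_inter_seg_subset_of_dist_add {a z b : X} (hz : dist a z + dist z b = dist a b) :
    seg h a z ∩ seg h z b ⊆ {z} := by
  rintro x ⟨hxa, hxb⟩
  have := h.dist_add_dist_of_mem_seg hxa
  have := h.dist_add_dist_of_mem_seg hxb
  have := dist_triangle a x b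
  have : dist x z = 0 := le_antisymm (by linarith [dist_comm z x]) dist_nonneg
  exact dist_eq_zero.1 this

theorem seg_eq_union_of_mem {a z b : X} (hz : z ∈ seg h a b) :
    seg h a b = seg h a z ∪ seg h z b :=
  h.seg_eq_union_of_inter_subset <|
    h.seg_inter_seg_subset_of_dist_add (h.dist_add_dist_of_mem_seg hz)

theorem mem_seg_iff_dist_add {a b z : X} : z ∈ seg h a b ↔ dist a z + dist z b = dist a b := by
  refine ⟨h.dist_add_dist_of_mem_seg, fun hz => ?_⟩
  rw [h.seg_eq_union_of_inter_subset (h.seg_inter_seg_subset_of_dist_add hz)]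
  exact Or.inl (h.right_mem_seg a z)

theorem seg_subset_of_mem_left {a b z : X} (hz : z ∈ seg h a b) : seg h a z ⊆ seg h a b :=
  (h.seg_eq_union_of_mem hz).symm ▸ subset_union_left

theorem seg_subset_of_mem_right {a b z : X} (hz : z ∈ seg h a b) : seg h z b ⊆ seg h a b :=
  (h.seg_eq_union_of_mem hz).symm ▸ subset_union_right

theorem mem_seg_of_isMinOn {T : Set X} {z y b : X} (hzy : seg h z y ⊆ T)
    (hy : IsMinOn (dist · b) T y) : y ∈ seg h z b := by
  have hinter : seg h z y ∩ seg h y b ⊆ {y} := by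
    rintro x ⟨hxz, hxb⟩
    have := isMinOn_iff.1 hy x (hzy hxz)
    have := h.dist_add_dist_of_mem_seg hxb
    exact (dist_eq_zero.1 (le_antisymm (by linarith) dist_nonneg)).symm
  rw [h.seg_eq_union_of_inter_subset hinter]
  exact Or.inl (h.right_mem_seg z y)

theorem exists_median_s15 (u v w : X) :
    ∃ m, m ∈ seg h u v ∧ m ∈ seg h u w ∧ m ∈ seg h v w := by
  obtain ⟨m, hm, hmin⟩ := (h.isCompact_seg u v).exists_isMinOn ⟨u, h.left_mem_seg u v⟩
    (continuous_id.dist continuous_const).continuousOn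
  refine ⟨m, hm, h.mem_seg_of_isMinOn (h.seg_subset_of_mem_left hm) hmin,
    h.mem_seg_of_isMinOn ?_ hmin⟩
  rw [h.seg_comm u v] at hm ⊢
  exact h.seg_subset_of_mem_left hm

theorem seg_subset_union (u v w : X) : seg h u v ⊆ seg h u w ∪ seg h w v := by
  obtain ⟨m, huv, huw, hvw⟩ := h.exists_median_s15 u v w
  rw [h.seg_eq_union_of_mem huv]
  rw [h.seg_comm v w] at hvw
  exact union_subset_union (h.seg_subset_of_mem_left huw) (h.seg_subset_of_mem_right hvw)

end IsRTree

section Branches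

variable {X : Type*} [MetricSpace X] {a x : X} {β : Set X}

theorem eq_connectedComponentIn_of_mem_branches_s15 (hβ : β ∈ Branches a) (hx : x ∈ β) :
    β = connectedComponentIn {a}ᶜ x := by
  obtain ⟨y, -, rfl⟩ := hβ
  exact connectedComponentIn_eq hx

theorem subset_compl_of_mem_branches (hβ : β ∈ Branches a) : β ⊆ {a}ᶜ := by
  obtain ⟨y, -, rfl⟩ := hβ
  exact connectedComponentIn_subset _ _

theorem nonempty_of_mem_branches (hβ : β ∈ Branches a) : β.Nonempty := by
  obtain ⟨y, hy, rfl⟩ := hβ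
  exact ⟨y, mem_connectedComponentIn hy⟩

theorem isPreconnected_of_mem_branches (hβ : β ∈ Branches a) : IsPreconnected β := by
  obtain ⟨y, -, rfl⟩ := hβ
  exact isPreconnected_connectedComponentIn

theorem disjoint_of_mem_branches {β' : Set X} (hβ : β ∈ Branches a) (hβ' : β' ∈ Branches a)
    (hne : β ≠ β') : Disjoint β β' :=
  disjoint_left.2 fun _ hx hx' =>
    hne ((eq_connectedComponentIn_of_mem_branches_s15 hβ hx).trans
      (eq_connectedComponentIn_of_mem_branches_s15 hβ' hx').symm)

/-- A preconnected set avoiding `a` lies in a single branch at `a`. -/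
theorem disjoint_of_mem_branches_of_isPreconnected {P : Set X} (hβ : β ∈ Branches a)
    (hP : IsPreconnected P) (haP : a ∉ P) (hx : x ∈ P) (hne : β ≠ connectedComponentIn {a}ᶜ x) :
    Disjoint β P := by
  have hPx : P ⊆ connectedComponentIn {a}ᶜ x :=
    hP.subset_connectedComponentIn hx fun z hz (hza : z = a) => haP (hza ▸ hz)
  refine disjoint_left.2 fun z hzβ hzP => hne ?_
  rw [eq_connectedComponentIn_of_mem_branches_s15 hβ hzβ, connectedComponentIn_eq (hPx hzP)]

theorem exists_mem_branches_heightGE_notMem {b : X} {η : ℝ} (hb : ThreeBranchesGE b η) :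
    ∃ β ∈ Branches b, HeightGE b β η ∧ x ∉ β := by
  obtain ⟨β₁, β₂, -, hβ₁, hβ₂, -, h12, -, -, hη₁, hη₂, -⟩ := hb
  by_cases hx₁ : x ∈ β₁
  · exact ⟨β₂, hβ₂, hη₂, disjoint_left.1 (disjoint_of_mem_branches hβ₁ hβ₂ h12) hx₁⟩
  · exact ⟨β₁, hβ₁, hη₁, hx₁⟩

theorem exists_mem_branches_forall_ne {X : Type u} [MetricSpace X] {a : X} {κ : Cardinal.{u}}
    (hκ : κ ≤ Cardinal.mk (Branches a)) {S : Set X} (hS : Cardinal.mk S < κ) :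
    ∃ β ∈ Branches a, ∀ x ∈ S, β ≠ connectedComponentIn {a}ᶜ x := by
  by_contra! hall
  have hsub : Branches a ⊆ (connectedComponentIn {a}ᶜ) '' S := fun β hβ => by
    obtain ⟨x, hx, rfl⟩ := hall β hβ
    exact mem_image_of_mem _ hx
  exact (hκ.trans ((Cardinal.mk_le_mk_of_subset hsub).trans Cardinal.mk_image_le)).not_gt hS

end Branches

namespace IsRTree

variable {X : Type*} [MetricSpace X] (h : IsRTree X)
include h

theorem mem_connectedComponentIn_of_seg_subset {a x y : X} (hs : seg h x y ⊆ {a}ᶜ) :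
    y ∈ connectedComponentIn {a}ᶜ x :=
  (h.isConnected_seg x y).isPreconnected.subset_connectedComponentIn (h.left_mem_seg x y) hs
    (h.right_mem_seg x y)

theorem mem_connectedComponentIn_of_dist_lt {a u v : X} (hd : dist v u < dist a v) :
    u ∈ connectedComponentIn {a}ᶜ v :=
  h.mem_connectedComponentIn_of_seg_subset fun z hz (hza : z = a) => by
    have := h.dist_add_dist_of_mem_seg hz
    rw [hza, dist_comm] at this
    linarith [dist_nonneg (x := a) (y := u)]

theorem mem_connectedComponentIn_of_mem_seg {a w z : X} (hz : z ∈ seg h a w) (hza : z ≠ a) :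
    z ∈ connectedComponentIn {a}ᶜ w :=
  h.mem_connectedComponentIn_of_seg_subset fun x hx (hxa : x = a) => hza <| by
    have hwx := h.dist_add_dist_of_mem_seg hx
    have haz := h.dist_add_dist_of_mem_seg hz
    rw [hxa] at hwx
    have : dist z a ≤ 0 := by linarith [dist_comm a w, dist_comm a z, dist_comm w z]
    exact dist_eq_zero.1 (le_antisymm this dist_nonneg)

theorem dist_eq_add_of_notMem_connectedComponentIn {a x w : X}
    (hw : w ∉ connectedComponentIn {a}ᶜ x) : dist x w = dist x a + dist a w := by
  by_contra hne
  exact hw (h.mem_connectedComponentIn_of_seg_subset fun z hz (hza : z = a) =>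
    hne (hza ▸ (h.dist_add_dist_of_mem_seg hz).symm))

variable {a u v w z : X} {β : Set X}

theorem mem_branch_of_mem_seg (hβ : β ∈ Branches a) (hw : w ∈ β) (hz : z ∈ seg h a w)
    (hza : z ≠ a) : z ∈ β :=
  eq_connectedComponentIn_of_mem_branches_s15 hβ hw ▸ h.mem_connectedComponentIn_of_mem_seg hz hza

theorem dist_eq_add_of_mem_branch (hβ : β ∈ Branches a) (hu : u ∈ β) (hv : v ∉ β) :
    dist v u = dist v a + dist a u :=
  h.dist_eq_add_of_notMem_connectedComponentIn fun huv => hv <| by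
    have hv' : v ∈ ({a}ᶜ : Set X) := connectedComponentIn_nonempty_iff.1 ⟨u, huv⟩
    rw [eq_connectedComponentIn_of_mem_branches_s15 hβ hu, ← connectedComponentIn_eq huv]
    exact mem_connectedComponentIn hv'

theorem subset_connectedComponentIn_of_mem_branches {c : X} (hβ : β ∈ Branches a) (hc : c ∉ β)
    (hca : c ≠ a) : β ⊆ connectedComponentIn {c}ᶜ a :=
  fun z hz => h.mem_connectedComponentIn_of_seg_subset fun x hx (hxc : x = c) => by
    subst hxc
    exact hc (h.mem_branch_of_mem_seg hβ hz hx hca)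

theorem exists_mem_branch_dist_eq (hβ : β ∈ Branches a) (hz : z ∈ β) {s : ℝ} (hs : 0 < s)
    (hsz : s ≤ dist a z) : ∃ w ∈ β, dist a w = s := by
  obtain ⟨w, hw, haw⟩ := h.exists_mem_seg_dist_eq ⟨hs.le, hsz⟩
  refine ⟨w, h.mem_branch_of_mem_seg hβ hz hw ?_, haw⟩
  rintro rfl
  rw [dist_self] at haw
  exact hs.ne' haw.symm

end IsRTree

namespace IsRTree

variable {M : Type*} [MetricSpace M] (hM : IsRTree M) {p : M} {r : ℝ}
include hM

theorem exists_mem_branch_dist_eq_of_heightGE {a : M} {β : Set M} {η s : ℝ}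
    (hβ : β ∈ Branches a) (hη : HeightGE a β η) (hs : 0 < s) (hsη : s < η) :
    ∃ w ∈ β, dist a w = s :=
  let ⟨_, hz, hsz⟩ := hη s hsη
  hM.exists_mem_branch_dist_eq hβ hz hs hsz.le

/-- Go out along a tall branch, not containing `x`, at a branching point near `v`. -/
theorem exists_far_mem_connectedComponentIn (hrb : RichlyBranchingAt p r) {x v : M}
    (hxv : 0 < dist x v) {t ε : ℝ} (hε : 0 < ε) (hvt : dist x v < t) (ht : t < r - dist p x) :
    ∃ w ∈ connectedComponentIn {x}ᶜ v, dist x w = t ∧ dist v w ≤ t - dist x v + ε := by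
  set δ := min (ε / 2) (min (dist x v) (t - dist x v))
  have hδ : 0 < δ := lt_min (half_pos hε) (lt_min hxv (sub_pos.2 hvt))
  obtain ⟨b, hbv, hb⟩ := Metric.dense_iff.1 hrb v δ hδ
  have hvb : dist v b < δ := by rw [dist_comm]; exact hbv
  have hvb₁ : dist v b < ε / 2 := hvb.trans_le (min_le_left _ _)
  have hvb₂ : dist v b < dist x v := hvb.trans_le ((min_le_right _ _).trans (min_le_left _ _))
  have hvb₃ : dist v b < t - dist x v :=
    hvb.trans_le ((min_le_right _ _).trans (min_le_right _ _))
  have hxb₁ := dist_triangle x v b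
  have hxb₂ := dist_triangle x b v
  have hpb := dist_triangle p x b
  have hxb : x ≠ b := by
    rintro rfl
    linarith [dist_comm x v]
  obtain ⟨β, hβ, hη, hxβ⟩ := exists_mem_branches_heightGE_notMem (x := x) hb
  obtain ⟨w, hwβ, hbw⟩ := hM.exists_mem_branch_dist_eq_of_heightGE hβ hη
    (sub_pos.2 (show dist x b < t by linarith)) (show t - dist x b < r - dist p b by linarith)
  have hxw := hM.dist_eq_add_of_mem_branch hβ hwβ hxβ
  have hvw := dist_triangle v b w
  refine ⟨w, ?_, by linarith, by linarith [dist_comm b v]⟩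
  rw [connectedComponentIn_eq (hM.mem_connectedComponentIn_of_dist_lt hvb₂)]
  exact hM.subset_connectedComponentIn_of_mem_branches hβ hxβ hxb hwβ

/-- Completeness: the limit of points pushed further and further out, with summable steps. -/
theorem exists_mem_connectedComponentIn_dist_eq [CompleteSpace M] (hrb : RichlyBranchingAt p r)
    {x u : M} (hxu : 0 < dist x u) {ℓ : ℝ} (huℓ : dist x u < ℓ) (hℓ : ℓ ≤ r - dist p x) :
    ∃ y ∈ connectedComponentIn {x}ᶜ u, dist x y = ℓ := by
  set d₀ := dist x u
  set t : ℕ → ℝ := fun n => ℓ - (ℓ - d₀) * (1 / 2) ^ n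
  have hpow : ∀ n : ℕ, (0 : ℝ) < (1 / 2) ^ n ∧ (1 / 2 : ℝ) ^ n ≤ 1 := fun n =>
    ⟨by positivity, pow_le_one₀ (by norm_num) (by norm_num)⟩
  have hd₀t : ∀ n, d₀ ≤ t n := fun n => by nlinarith [hpow n]
  have htℓ : ∀ n, t n < ℓ := fun n => by nlinarith [hpow n]
  have step : ∀ n v, v ∈ connectedComponentIn {x}ᶜ u ∧ dist x v = t n →
      ∃ w, (w ∈ connectedComponentIn {x}ᶜ u ∧ dist x w = t (n + 1)) ∧
        dist v w ≤ (ℓ - d₀) * (1 / 2) ^ n := by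
    rintro n v ⟨hv, hxv⟩
    have hε : 0 < (ℓ - d₀) * (1 / 2) ^ (n + 1) := mul_pos (by linarith) (by positivity)
    obtain ⟨w, hw, hxw, hvw⟩ := hM.exists_far_mem_connectedComponentIn hrb (t := t (n + 1))
      (hxv ▸ hxu.trans_le (hd₀t n)) hε (by rw [hxv]; simp only [t, pow_succ]; nlinarith [hpow n])
      ((htℓ _).trans_le hℓ)
    refine ⟨w, ⟨connectedComponentIn_eq hv ▸ hw, hxw⟩, hvw.trans_eq ?_⟩
    simp only [hxv, t, pow_succ]
    ring
  choose! g hg using step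
  let Y : ℕ → M := fun n => Nat.rec u (fun k v => g k v) n
  have hY : ∀ n, Y n ∈ connectedComponentIn {x}ᶜ u ∧ dist x (Y n) = t n := by
    intro n
    induction n with
    | zero => exact ⟨mem_connectedComponentIn (dist_pos.1 hxu).symm, by simp [Y, t, d₀]⟩
    | succ n ih => exact (hg n (Y n) ih).1
  obtain ⟨y, hy⟩ := cauchySeq_tendsto_of_complete
    (cauchySeq_of_le_geometric (1 / 2) _ (by norm_num) fun n => (hg n (Y n) (hY n)).2)
  have htlim : Tendsto (fun n => dist x (Y n)) atTop (𝓝 ℓ) := by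
    simp only [fun n => (hY n).2, t]
    simpa using tendsto_const_nhds.sub ((tendsto_pow_atTop_nhds_zero_of_lt_one
      (by norm_num : (0 : ℝ) ≤ 1 / 2) (by norm_num)).const_mul (ℓ - d₀))
  have hxy : dist x y = ℓ := tendsto_nhds_unique (tendsto_const_nhds.dist hy) htlim
  obtain ⟨n, hn⟩ := ((tendsto_iff_dist_tendsto_zero.1 hy).eventually_lt htlim
    (hxu.trans huℓ)).exists
  exact ⟨y, connectedComponentIn_eq (hY n).1 ▸ hM.mem_connectedComponentIn_of_dist_lt hn, hxy⟩

theorem exists_mem_branch_dist_eq_of_le [CompleteSpace M] (hrb : RichlyBranchingAt p r) {a : M}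
    {β : Set M} (hβ : β ∈ Branches a) {ℓ : ℝ} (hℓ : 0 < ℓ) (hℓr : ℓ ≤ r - dist p a) :
    ∃ w ∈ β, dist a w = ℓ := by
  obtain ⟨z, hz⟩ := nonempty_of_mem_branches hβ
  have haz : 0 < dist a z := dist_pos.2 fun haz => subset_compl_of_mem_branches hβ hz haz.symm
  obtain ⟨u, hu, hau⟩ := hM.exists_mem_branch_dist_eq hβ hz (lt_min haz (half_pos hℓ))
    (min_le_left _ (ℓ / 2))
  obtain ⟨y, hy, hay⟩ := hM.exists_mem_connectedComponentIn_dist_eq hrb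
    (hau ▸ lt_min haz (half_pos hℓ)) (hau ▸ (min_le_right _ _).trans_lt (half_lt_self hℓ)) hℓr
  exact ⟨y, eq_connectedComponentIn_of_mem_branches_s15 hβ hu ▸ hy, hay⟩

end IsRTree

namespace IsRTree

variable {X : Type*} [MetricSpace X] (h : IsRTree X)

def hull (A : Set X) : Set X :=
  {x | ∃ a ∈ A, ∃ b ∈ A, x ∈ seg h a b}

include h

variable {A : Set X}

theorem subset_hull : A ⊆ h.hull A :=
  fun a ha => ⟨a, ha, a, ha, h.left_mem_seg a a⟩

theorem hull_mono {B : Set X} (hAB : A ⊆ B) : h.hull A ⊆ h.hull B := by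
  rintro x ⟨a, ha, b, hb, hx⟩
  exact ⟨a, hAB ha, b, hAB hb, hx⟩

theorem hull_singleton (a : X) : h.hull {a} = {a} := by
  ext x
  simp [hull, h.seg_self]

theorem seg_subset_hull {x y : X} (hx : x ∈ h.hull A) (hy : y ∈ h.hull A) :
    seg h x y ⊆ h.hull A := by
  obtain ⟨a, ha, b, hb, hxab⟩ := hx
  obtain ⟨a', ha', b', hb', hya'b'⟩ := hy
  have hxa : seg h x a ⊆ seg h a b := by
    rw [h.seg_comm]
    exact h.seg_subset_of_mem_left hxab
  intro z hz
  rcases h.seg_subset_union x y a hz with hz | hz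
  · exact ⟨a, ha, b, hb, hxa hz⟩
  rcases h.seg_subset_union a y a' hz with hz | hz
  · exact ⟨a, ha, a', ha', hz⟩
  · exact ⟨a', ha', b', hb', h.seg_subset_of_mem_left hya'b' hz⟩

theorem isCompact_hull (hA : A.Finite) : IsCompact (h.hull A) := by
  have : h.hull A = ⋃ a ∈ A, ⋃ b ∈ A, seg h a b := by
    ext x
    simp [hull]
  rw [this]
  exact hA.isCompact_biUnion fun a _ => hA.isCompact_biUnion fun b _ => h.isCompact_seg a b

theorem exists_gate {T : Set X} (hT : IsCompact T) (hTne : T.Nonempty)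
    (hconv : ∀ x ∈ T, ∀ y ∈ T, seg h x y ⊆ T) (b : X) : ∃ y ∈ T, ∀ z ∈ T, y ∈ seg h z b := by
  obtain ⟨y, hyT, hmin⟩ :=
    hT.exists_isMinOn hTne (continuous_id.dist continuous_const).continuousOn
  exact ⟨y, hyT, fun z hz => h.mem_seg_of_isMinOn (hconv z hz y hyT) hmin⟩

theorem hull_insert_eq_union_seg {y b : X} (hy : y ∈ h.hull A)
    (hgate : ∀ z ∈ h.hull A, y ∈ seg h z b) : h.hull (insert b A) = h.hull A ∪ seg h y b := by
  have hcb : ∀ c ∈ A, seg h c b ⊆ h.hull A ∪ seg h y b := fun c hc => by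
    rw [h.seg_eq_union_of_mem (hgate c (h.subset_hull hc))]
    exact union_subset_union_left _ (h.seg_subset_hull (h.subset_hull hc) hy)
  refine Subset.antisymm ?_ (union_subset (h.hull_mono (subset_insert b A)) ?_)
  · rintro x ⟨c₁, hc₁ | hc₁, c₂, hc₂ | hc₂, hx⟩
    · rw [hc₁, hc₂, h.seg_self] at hx
      exact Or.inr (hx ▸ h.right_mem_seg y b)
    · rw [hc₁, h.seg_comm] at hx
      exact hcb c₂ hc₂ hx
    · rw [hc₂] at hx
      exact hcb c₁ hc₁ hx
    · exact Or.inl ⟨c₁, hc₁, c₂, hc₂, hx⟩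
  · exact h.seg_subset_hull (h.hull_mono (subset_insert b A) hy)
      (h.subset_hull (mem_insert b A))

theorem mem_seg_of_mem_seg_of_mem_seg {z y x b : X} (hy : y ∈ seg h z b) (hx : x ∈ seg h y b) :
    y ∈ seg h z x := by
  rw [h.mem_seg_iff_dist_add] at hy hx ⊢
  linarith [dist_triangle z x b, dist_triangle z y x]

theorem notMem_seg_or_notMem_seg {c₁ c₂ y z : X} (hz : z ∈ seg h c₁ c₂) (hzy : z ≠ y) :
    y ∉ seg h c₁ z ∨ y ∉ seg h c₂ z := by
  by_contra! ⟨hy₁, hy₂⟩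
  rw [h.mem_seg_iff_dist_add] at hz hy₁ hy₂
  have := dist_triangle c₁ y c₂
  have : dist z y ≤ 0 := by linarith [dist_comm y c₂, dist_comm z c₂, dist_comm y z]
  exact hzy (dist_eq_zero.1 (le_antisymm this dist_nonneg))

end IsRTree

section Extension

variable {K M : Type*} [MetricSpace K] [MetricSpace M] (hK : IsRTree K) (hM : IsRTree M)

theorem IsRTree.exists_isometricOn_seg {y b : K} {a w : M} (hd : dist a w = dist y b) :
    ∃ g : K → M, IsometricOn g (seg hK y b) ∧
      ∀ x ∈ seg hK y b, g x ∈ seg hM a w ∧ dist a (g x) = dist y x := by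
  obtain ⟨ρ, -, hρ, hρ0, -, hs⟩ := hM.exists_param a w
  rw [hd] at hρ hs
  have hmem : ∀ x ∈ seg hK y b, dist y x ∈ Icc 0 (dist y b) := fun x hx =>
    ⟨dist_nonneg, by linarith [hK.dist_add_dist_of_mem_seg hx, dist_nonneg (x := x) (y := b)]⟩
  refine ⟨fun x => ρ (dist y x), fun x hx x' hx' => ?_, fun x hx =>
    ⟨hs ▸ mem_image_of_mem ρ (hmem x hx), hρ0 ▸ dist_eq_of_isometricOn_Icc hρ (hmem x hx)⟩⟩
  rw [hρ _ (hmem x hx) _ (hmem x' hx'), hK.dist_eq_abs_sub_of_mem_seg hx hx', Real.dist_eq]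

theorem IsRTree.notMem_of_isometricOn_hull {C : Set K} {f : K → M}
    (hf : IsometricOn f (hK.hull C)) {y : K} (hy : y ∈ hK.hull C) {β : Set M}
    (hβ : β ∈ Branches (f y)) (hne : ∀ c ∈ C, β ≠ connectedComponentIn {f y}ᶜ (f c)) :
    ∀ z ∈ hK.hull C, f z ∉ β := by
  intro z hz
  rcases eq_or_ne z y with rfl | hzy
  · exact fun hzβ => subset_compl_of_mem_branches hβ hzβ rfl
  -- `f` maps `[c, z]` to a connected set missing `f y`
  obtain ⟨c, hc, hyc⟩ : ∃ c ∈ C, y ∉ seg hK c z := by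
    obtain ⟨c₁, hc₁, c₂, hc₂, hzc⟩ := hz
    rcases hK.notMem_seg_or_notMem_seg hzc hzy with hy₁ | hy₂
    exacts [⟨c₁, hc₁, hy₁⟩, ⟨c₂, hc₂, hy₂⟩]
  have hcz : seg hK c z ⊆ hK.hull C := hK.seg_subset_hull (hK.subset_hull hc) hz
  have hfy : f y ∉ f '' seg hK c z := by
    rintro ⟨x, hx, hfx⟩
    exact hyc (hf.injOn (hcz hx) hy hfx ▸ hx)
  exact disjoint_right.1 (disjoint_of_mem_branches_of_isPreconnected hβ
    ((hK.isConnected_seg c z).isPreconnected.image f (hf.continuousOn.mono hcz)) hfy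
    (mem_image_of_mem f (hK.left_mem_seg c z)) (hne c hc))
    (mem_image_of_mem f (hK.right_mem_seg c z))

include hM in
theorem IsRTree.exists_extension_to_seg {T : Set K} {f : K → M} (hf : IsometricOn f T) {y b : K}
    (hyT : y ∈ T) (hgate : ∀ z ∈ T, y ∈ seg hK z b) {βs : Set M} (hβs : βs ∈ Branches (f y))
    (hfβs : ∀ z ∈ T, f z ∉ βs) {w : M} (hw : w ∈ βs) (hyw : dist (f y) w = dist y b) :
    ∃ f' : K → M, EqOn f' f T ∧ IsometricOn f' (T ∪ seg hK y b) ∧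
      MapsTo f' (seg hK y b \ T) βs := by
  classical
  obtain ⟨g, hg, hgseg⟩ := hK.exists_isometricOn_seg hM hyw
  have hgβs : MapsTo g (seg hK y b \ T) βs := fun x ⟨hx, hxT⟩ =>
    hM.mem_branch_of_mem_seg hβs hw (hgseg x hx).1 fun hgx => hxT <| by
      have := (hgseg x hx).2
      rw [hgx, dist_self, eq_comm, dist_eq_zero] at this
      exact this ▸ hyT
  -- distances from `T` to `[y, b]` add up through `y`, on both sides
  have hmixed : ∀ z ∈ T, ∀ x ∈ seg hK y b, dist (f z) (g x) = dist z x := by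
    intro z hz x hx
    rw [← (hK.mem_seg_iff_dist_add).1 (hK.mem_seg_of_mem_seg_of_mem_seg (hgate z hz) hx),
      ← hf z hz y hyT, ← (hgseg x hx).2]
    by_cases hxT : x ∈ T
    · obtain rfl : x = y := by
        have := hK.dist_add_dist_of_mem_seg (hgate x hxT)
        have := hK.dist_add_dist_of_mem_seg hx
        exact (dist_eq_zero.1 (by linarith [dist_nonneg (x := x) (y := y), dist_comm x y])).symm
      rw [(dist_eq_zero.1 ((hgseg x hx).2.trans (dist_self x))).symm, dist_self, add_zero]
    · exact hM.dist_eq_add_of_mem_branch hβs (hgβs ⟨hx, hxT⟩) (hfβs z hz)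
  exact ⟨T.piecewise f g, piecewise_eqOn T f g, hf.piecewise hg hmixed,
    fun x hx => (piecewise_eq_of_notMem _ _ _ hx.2).symm ▸ hgβs hx⟩

end Extension

section Embedding

variable {M : Type u} [MetricSpace M] [CompleteSpace M] (hM : IsRTree M) {p : M} {r : ℝ}
  (hrb : RichlyBranchingAt p r) {κ : Cardinal.{u}} (hκ : Cardinal.aleph0 ≤ κ)
  (hbr : ∀ a : M, dist p a < r → κ ≤ Cardinal.mk (Branches a))
  {K : Type*} [MetricSpace K] (hK : IsRTree K) {q : K} {e : M}
  (he : ∀ x : K, dist q x ≤ r - dist p e)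
  {ι : Type u} (hι : Cardinal.mk ι < κ) {β : ι → Set M} (hβ : ∀ i, β i ∈ Branches e)
include hM hrb hκ hbr he hι hβ

theorem exists_extension_hull_insert {C : Set K} (hC : C.Finite) (hqC : q ∈ C) {f : K → M}
    (hf : IsometricOn f (hK.hull C)) (hfq : f q = e) (hfβ : ∀ i, ∀ x ∈ hK.hull C, f x ∉ β i)
    (b : K) : ∃ f' : K → M, IsometricOn f' (hK.hull (insert b C)) ∧ f' q = e ∧
      ∀ i, ∀ x ∈ hK.hull (insert b C), f' x ∉ β i := by
  classical
  set T := hK.hull C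
  have hqT : q ∈ T := hK.subset_hull hqC
  obtain ⟨y, hyT, hgate⟩ := hK.exists_gate (hK.isCompact_hull hC) ⟨q, hqT⟩
    (fun _ hx _ hx' => hK.seg_subset_hull hx hx') b
  have hhull := hK.hull_insert_eq_union_seg hyT hgate
  rcases eq_or_ne y b with rfl | hyb
  · rw [hK.seg_self, union_singleton, insert_eq_of_mem hyT] at hhull
    exact ⟨f, hhull ▸ hf, hfq, hhull ▸ hfβ⟩
  have hyb_fits : dist y b ≤ r - dist p (f y) := by
    have hqyb := hK.dist_add_dist_of_mem_seg (hgate q hqT)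
    have hey : dist e (f y) = dist q y := hfq ▸ hf q hqT y hyT
    linarith [he b, dist_triangle p e (f y)]
  choose pt hpt using fun i => nonempty_of_mem_branches (hβ i)
  have hcard : Cardinal.mk ↥(f '' C ∪ range pt) < κ :=
    (Cardinal.mk_union_le _ _).trans_lt (Cardinal.add_lt_of_lt hκ
      ((hC.image f).lt_aleph0.trans_le hκ) (Cardinal.mk_range_le.trans_lt hι))
  obtain ⟨βs, hβs, hfresh⟩ := exists_mem_branches_forall_ne
    (hbr (f y) (by linarith [dist_pos.2 hyb])) hcard
  obtain ⟨w, hwβs, hyw⟩ := hM.exists_mem_branch_dist_eq_of_le hrb hβs (dist_pos.2 hyb) hyb_fits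
  obtain ⟨f', hf'f, hf', hf'βs⟩ := hK.exists_extension_to_seg hM hf hyT hgate hβs
    (hK.notMem_of_isometricOn_hull hf hyT hβs fun c hc =>
      hfresh _ (Or.inl (mem_image_of_mem f hc))) hwβs hyw
  refine ⟨f', hhull ▸ hf', (hf'f hqT).trans hfq, fun i x hx hxβ => ?_⟩
  rw [hhull] at hx
  by_cases hxT : x ∈ T
  · exact hfβ i x hxT (hf'f hxT ▸ hxβ)
  · exact disjoint_left.1 (disjoint_of_mem_branches_of_isPreconnected hβs
      (isPreconnected_of_mem_branches (hβ i)) (hfβ i y hyT) (hpt i)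
      (hfresh _ (Or.inr (mem_range_self i)))) (hf'βs ⟨hx.resolve_left hxT, hxT⟩) hxβ

theorem exists_embedding_hull_insert {S : Set K} (hS : S.Finite) :
    ∃ f : K → M, IsometricOn f (hK.hull (insert q S)) ∧ f q = e ∧
      ∀ i, ∀ x ∈ hK.hull (insert q S), f x ∉ β i := by
  induction S, hS using Set.Finite.induction_on with
  | empty =>
    have hq : hK.hull (insert q ∅) = {q} := by rw [insert_empty_eq, hK.hull_singleton]
    refine ⟨fun _ => e, fun x hx y hy => ?_, rfl,
      fun i _ _ hxβ => subset_compl_of_mem_branches (hβ i) hxβ rfl⟩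
    rw [hq] at hx hy
    rw [mem_singleton_iff.1 hx, mem_singleton_iff.1 hy, dist_self, dist_self]
  | @insert b S _ hS ih =>
    obtain ⟨f, hf, hfq, hfβ⟩ := ih
    rw [insert_comm]
    exact exists_extension_hull_insert hM hrb hκ hbr hK he hι hβ (hS.insert q) (mem_insert q S)
      hf hfq hfβ b

end Embedding

theorem statement_15_general {M : Type u} [MetricSpace M] [CompleteSpace M]
    (r : ℝ) (hM : IsRTree M) (p : M)
    (hrb : RichlyBranchingAt p r)
    (κ : Cardinal.{u}) (hκ : Cardinal.aleph0 ≤ κ)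
    (hbr : ∀ a : M, dist p a < r → κ ≤ Cardinal.mk ↥(Branches a))
    (K : Type u) [MetricSpace K] (hK : IsRTree K)
    (hKfin : ∃ B : Set K, B.Finite ∧ Spans hK B)
    (q : K) (e : M)
    (he : ∀ x : K, dist q x ≤ r - dist p e)
    (ι : Type u) (hι : Cardinal.mk ι < κ)
    (β : ι → Set M) (hβ : ∀ i : ι, β i ∈ Branches e) :
    ∃ f : K → M, (∀ x y : K, dist (f x) (f y) = dist x y) ∧ f q = e ∧
      ∀ i : ι, Disjoint (Set.range f) (β i) := by
  obtain ⟨B, hB, hspan⟩ := hKfin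
  obtain ⟨f, hf, hfq, hfβ⟩ := exists_embedding_hull_insert hM hrb hκ hbr hK he hι hβ hB
  have hall : ∀ x, x ∈ hK.hull (insert q B) := fun x => hK.hull_mono (subset_insert q B) (hspan x)
  refine ⟨f, fun x y => hf x (hall x) y (hall y), hfq, fun i => disjoint_left.2 ?_⟩
  rintro _ ⟨x, rfl⟩ hx
  exact hfβ i x (hall x) hx

/-- Embedding lemma: in a complete richly branching pointed ℝ-tree
of radius `r` with at least `κ` branches at every interior point, any nonempty
finitely spanned ℝ-tree `K` with designated point `q` such that
`r − d(p,e) ≥ sup {d(q,x) : x ∈ K}` embeds isometrically with `q ↦ e`, avoiding any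
prescribed collection of fewer than `κ` branches at `e`. -/
theorem statement_15 {M : Type u} [MetricSpace M] [CompleteSpace M]
    (r : ℝ) (hr : 0 < r) (hM : IsRTree M) (p : M)
    (hrad : ∀ x : M, dist p x ≤ r)
    (hradEq : IsLUB (Set.range fun x : M => dist p x) r)
    (hrb : RichlyBranchingAt p r)
    (κ : Cardinal.{u}) (hκ : Cardinal.aleph0 ≤ κ)
    (hbr : ∀ a : M, dist p a < r → κ ≤ Cardinal.mk ↥(Branches a))
    (K : Type u) [MetricSpace K] [Nonempty K] (hK : IsRTree K)
    (hKfin : ∃ B : Set K, B.Finite ∧ Spans hK B)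
    (q : K) (e : M)
    (he : ∀ x : K, dist q x ≤ r - dist p e)
    (ι : Type u) (hι : Cardinal.mk ι < κ)
    (β : ι → Set M) (hβ : ∀ i : ι, β i ∈ Branches e) :
    ∃ f : K → M, (∀ x y : K, dist (f x) (f y) = dist x y) ∧ f q = e ∧
      ∀ i : ι, Disjoint (Set.range f) (β i) :=
  statement_15_general r hM p hrb κ hκ hbr K hK hKfin q e he ι hι β hβ
end
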